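/- arXiv:2411.11849 — 5 statements merged into one kernel-verified Lean document; each statement's English description precedes it below -/
import Mathlib

section
/- For every non-negative integer m, ∑_{n=1}^∞ 4^n / (n² · C(2(n+m), n+m) · C(n+m, m)) = (1 / C(2m, m)) · (3 ζ(2) − 4 O_m^{(2)}). -/
open scoped BigOperators

/-- Generalized odd harmonic number `O_m^{(r)} = ∑_{j=1}^m 1/(2j−1)^r`. -/
noncomputable def oddH (r m : ℕ) : ℂ :=
  ∑ j ∈ Finset.Icc 1 m, 1 / (2 * (j : ℂ) - 1) ^ r

open scoped Nat
open Real Filter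

noncomputable def fA (m n : ℕ) : ℝ :=
  4 ^ (n+1) * (2*m)! * (n+1+m)! * (n+1)! / ((m)! * ((n:ℝ)+1)^2 * (2*(n+1+m))!)

noncomputable def hA (m n : ℕ) : ℝ :=
  2 * 4 ^ (n+1) * (2*m)! * (n+1+m)! * n ! / ((2*(m:ℝ)+1) * (m)! * (2*(n+1+m))!)

lemma factR_pos (x : ℕ) : (0:ℝ) < (x ! : ℝ) := by exact_mod_cast x.factorial_pos

lemma fA_pos (m n : ℕ) : 0 < fA m n := by
  unfold fA; positivity

lemma hA_pos (m n : ℕ) : 0 < hA m n := by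
  unfold hA; positivity

lemma castfact_succ (x : ℕ) : ((x+1)! : ℝ) = ((x:ℝ)+1) * (x ! : ℝ) := by
  rw [Nat.factorial_succ]; push_cast; ring

lemma castfact_two_succ (x : ℕ) : ((2*(x+1))! : ℝ) = (2*(x:ℝ)+2) * (2*(x:ℝ)+1) * ((2*x)! : ℝ) := by
  have h : 2*(x+1) = (2*x+1)+1 := by ring
  rw [h, Nat.factorial_succ, Nat.factorial_succ]; push_cast; ring

lemma I1 (m n : ℕ) : fA m n - fA (m+1) n = hA m n - hA m (n+1) := by
  unfold fA hA
  have e1 : n+1+(m+1) = (n+1+m)+1 := by ring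
  have e2 : n+1+1+m = (n+1+m)+1 := by ring
  rw [e1, e2, castfact_succ (n+1+m), castfact_two_succ (n+1+m), castfact_two_succ m,
    castfact_succ m, castfact_succ n, pow_succ 4 (n+1)]
  have h1 := factR_pos n
  have h2 := factR_pos m
  have h3 := factR_pos (2*m)
  have h4 := factR_pos (n+1+m)
  have h5 := factR_pos (2*(n+1+m))
  have h6 : (0:ℝ) < (n:ℝ)+1 := by positivity
  have h7 : (0:ℝ) < 2*(m:ℝ)+1 := by positivity
  have h8 : (0:ℝ) < (m:ℝ)+1 := by positivity
  have h9 : (0:ℝ) < 2*(n:ℝ)+2*m+3 := by positivity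
  push_cast
  field_simp
  ring

/-- ratio identity for h: `h(n+1)·(2n+2m+3) = h(n)·(2n+2)` -/
lemma Eh (m n : ℕ) : hA m (n+1) * (2*(n:ℝ)+2*m+3) = hA m n * (2*(n:ℝ)+2) := by
  unfold hA
  have e2 : n+1+1+m = (n+1+m)+1 := by ring
  rw [e2, castfact_succ (n+1+m), castfact_two_succ (n+1+m), castfact_succ n, pow_succ 4 (n+1)]
  have h1 := factR_pos n
  have h3 := factR_pos (2*m)
  have h4 := factR_pos (n+1+m)
  have h5 := factR_pos (2*(n+1+m))
  have h2 := factR_pos m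
  have h7 : (0:ℝ) < 2*(m:ℝ)+1 := by positivity
  push_cast
  field_simp
  ring

/-- telescoped term identity: `(2n+2m+3)·(h n − h (n+1)) = (2n+2)·f n` -/
lemma Eg (m n : ℕ) : (2*(n:ℝ)+2*m+3) * (hA m n - hA m (n+1)) = (2*(n:ℝ)+2) * fA m n := by
  unfold fA hA
  have e2 : n+1+1+m = (n+1+m)+1 := by ring
  rw [e2, castfact_succ (n+1+m), castfact_two_succ (n+1+m), castfact_succ n, pow_succ 4 (n+1)]
  have h1 := factR_pos n
  have h3 := factR_pos (2*m)
  have h4 := factR_pos (n+1+m)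
  have h5 := factR_pos (2*(n+1+m))
  have h2 := factR_pos m
  have h6 : (0:ℝ) < (n:ℝ)+1 := by positivity
  have h7 : (0:ℝ) < 2*(m:ℝ)+1 := by positivity
  push_cast
  field_simp
  ring

/-- ratio identity in m: `f(m+1)·(2n+2m+3) = (2m+1)·f(m)` -/
lemma Ef (m n : ℕ) : fA (m+1) n * (2*(n:ℝ)+2*m+3) = (2*(m:ℝ)+1) * fA m n := by
  unfold fA
  have e1 : n+1+(m+1) = (n+1+m)+1 := by ring
  rw [e1, castfact_succ (n+1+m), castfact_two_succ (n+1+m), castfact_two_succ m,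
    castfact_succ m]
  have h1 := factR_pos n
  have h2 := factR_pos m
  have h3 := factR_pos (2*m)
  have h4 := factR_pos (n+1+m)
  have h5 := factR_pos (2*(n+1+m))
  have h6 : (0:ℝ) < (n:ℝ)+1 := by positivity
  have h8 : (0:ℝ) < (m:ℝ)+1 := by positivity
  push_cast
  field_simp
  ring

lemma hA_zero (m : ℕ) : hA m 0 = 4 / (2*(m:ℝ)+1)^2 := by
  unfold hA
  have e : 0+1+m = m+1 := by ring
  rw [e, castfact_succ m, castfact_two_succ m]
  have h2 := factR_pos m
  have h3 := factR_pos (2*m)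
  have h7 : (0:ℝ) < 2*(m:ℝ)+1 := by positivity
  have h8 : (0:ℝ) < (m:ℝ)+1 := by positivity
  push_cast
  field_simp
  ring

lemma hA_antitone (m n : ℕ) : hA m (n+1) ≤ hA m n := by
  have h := Eh m n
  have h1 := (hA_pos m (n+1)).le
  nlinarith [hA_pos m n]

lemma hA_sq_le (m n : ℕ) : ((n:ℝ)+2) * hA m (n+1)^2 ≤ ((n:ℝ)+1) * hA m n^2 := by
  have h := Eh m n
  have hn : (0:ℝ) ≤ (n:ℝ) := Nat.cast_nonneg n
  have hm : (0:ℝ) ≤ (m:ℝ) := Nat.cast_nonneg m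
  have key : ((n:ℝ)+2) * (2*(n:ℝ)+2)^2 ≤ ((n:ℝ)+1) * (2*(n:ℝ)+2*m+3)^2 := by
    nlinarith [mul_nonneg hn hm, mul_nonneg hm hm, mul_nonneg (mul_nonneg hn hn) hm,
      mul_nonneg (mul_nonneg hn hm) hm, mul_nonneg (mul_nonneg hm hm) hm]
  have h3 : (0:ℝ) < (2*(n:ℝ)+2*m+3)^2 := by positivity
  have expand : hA m (n+1)^2 * (2*(n:ℝ)+2*m+3)^2 = hA m n^2 * (2*(n:ℝ)+2)^2 := by
    rw [← mul_pow, ← mul_pow, h]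
  apply le_of_mul_le_mul_right _ h3
  have e2 : ((n:ℝ)+2) * hA m (n+1)^2 * (2*(n:ℝ)+2*m+3)^2
      = ((n:ℝ)+2) * (hA m n^2 * (2*(n:ℝ)+2)^2) := by
    rw [mul_assoc, expand]
  rw [e2]
  nlinarith [mul_le_mul_of_nonneg_left key (sq_nonneg (hA m n))]

lemma hA_sq_bound (m n : ℕ) : ((n:ℝ)+1) * hA m n^2 ≤ hA m 0^2 := by
  induction n with
  | zero => simp
  | succ n ih =>
    refine le_trans ?_ ih
    have := hA_sq_le m n
    push_cast
    linarith

lemma hA_tendsto_zero (m : ℕ) : Tendsto (hA m) atTop (nhds 0) := by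
  have hsq : Tendsto (fun n : ℕ => hA m n ^ 2) atTop (nhds 0) := by
    have hub : ∀ n : ℕ, hA m n ^ 2 ≤ hA m 0^2 / ((n:ℝ)+1) := by
      intro n
      rw [le_div_iff₀ (by positivity)]
      have := hA_sq_bound m n
      linarith [this]
    have h2 : Tendsto (fun n : ℕ => hA m 0^2 / ((n:ℝ)+1)) atTop (nhds 0) := by
      have := tendsto_const_div_atTop_nhds_zero_nat (hA m 0 ^ 2)
      have hshift := this.comp (tendsto_add_atTop_nat 1)
      apply hshift.congr
      intro n
      show hA m 0 ^ 2 / ((n+1:ℕ):ℝ) = _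
      push_cast
      ring
    exact squeeze_zero (fun n => sq_nonneg _) hub h2
  have := (Real.continuous_sqrt.tendsto 0).comp hsq
  simp only [Real.sqrt_zero, Function.comp] at this
  have heq : (hA m) = fun n => Real.sqrt (hA m n ^ 2) := by
    funext n; rw [Real.sqrt_sq (hA_pos m n).le]
  rw [heq]; exact this

lemma hasSum_g (m : ℕ) : HasSum (fun n => hA m n - hA m (n+1)) (4 / (2*(m:ℝ)+1)^2) := by
  have hnonneg : ∀ n, 0 ≤ hA m n - hA m (n+1) := fun n => sub_nonneg.mpr (hA_antitone m n)
  rw [← hA_zero m]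
  rw [hasSum_iff_tendsto_nat_of_nonneg hnonneg]
  have hps : ∀ N : ℕ, ∑ i ∈ Finset.range N, (hA m i - hA m (i+1)) = hA m 0 - hA m N :=
    fun N => Finset.sum_range_sub' (hA m) N
  simp only [hps]
  have := (hA_tendsto_zero m).const_sub (hA m 0)
  simpa using this

lemma fA_le (m n : ℕ) : fA m n ≤ (2*(m:ℝ)+3)/2 * (hA m n - hA m (n+1)) := by
  have h := Eg m n
  have h1 := (fA_pos m n).le
  have hg : 0 ≤ hA m n - hA m (n+1) := sub_nonneg.mpr (hA_antitone m n)
  have hn : (0:ℝ) ≤ (n:ℝ) := Nat.cast_nonneg n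
  have hm : (0:ℝ) ≤ (m:ℝ) := Nat.cast_nonneg m
  nlinarith [mul_nonneg (mul_nonneg hn hm) hg, mul_nonneg hn hg, mul_nonneg hm hg]

lemma fA_summable (m : ℕ) : Summable (fA m) := by
  apply Summable.of_nonneg_of_le (fun n => (fA_pos m n).le) (fA_le m)
  exact ((hasSum_g m).summable).mul_left _

noncomputable def SR (m : ℕ) : ℝ := ∑' n, fA m n

noncomputable def OmR (m : ℕ) : ℝ := ∑ j ∈ Finset.Icc 1 m, 1 / (2*(j:ℝ)-1)^2

lemma SR_rec (m : ℕ) : SR (m+1) = SR m - 4/(2*(m:ℝ)+1)^2 := by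
  have h : SR m - SR (m+1) = 4/(2*(m:ℝ)+1)^2 := by
    rw [SR, SR, ← Summable.tsum_sub (fA_summable m) (fA_summable (m+1)),
      tsum_congr (I1 m)]
    exact (hasSum_g m).tsum_eq
  linarith

lemma OmR_succ (m : ℕ) : OmR (m+1) = OmR m + 1/(2*(m:ℝ)+1)^2 := by
  rw [OmR, OmR, Finset.sum_Icc_succ_top (by omega : 1 ≤ m+1)]
  push_cast
  congr 1
  ring

lemma SR_eq (m : ℕ) : SR m = SR 0 - 4 * OmR m := by
  induction m with
  | zero => simp [OmR]
  | succ m ih => rw [SR_rec, ih, OmR_succ]; ring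

lemma fA_le_zero (m n : ℕ) : (2*(m:ℝ)+1) * fA m n ≤ fA 0 n := by
  induction m with
  | zero => simp
  | succ m ih =>
    have h := Ef m n
    have h1 := (fA_pos (m+1) n).le
    have hn : (0:ℝ) ≤ (n:ℝ) := Nat.cast_nonneg n
    push_cast
    nlinarith [mul_nonneg hn h1]

lemma SR_nonneg (m : ℕ) : 0 ≤ SR m := tsum_nonneg fun n => (fA_pos m n).le

lemma SR_le (m : ℕ) : SR m ≤ SR 0 / (2*(m:ℝ)+1) := by
  have hle : ∀ n, fA m n ≤ fA 0 n / (2*(m:ℝ)+1) := by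
    intro n
    rw [le_div_iff₀ (by positivity)]
    have := fA_le_zero m n
    linarith
  calc SR m ≤ ∑' n, fA 0 n / (2*(m:ℝ)+1) :=
        Summable.tsum_le_tsum hle (fA_summable m) ((fA_summable 0).div_const _)
    _ = SR 0 / (2*(m:ℝ)+1) := by rw [tsum_div_const]; rfl

lemma SR_tendsto : Tendsto SR atTop (nhds 0) := by
  apply squeeze_zero SR_nonneg SR_le
  have hmono : ∀ m : ℕ, id m ≤ 2*m+1 := fun m => by simp only [id]; omega
  have h1 : Tendsto (fun m : ℕ => (2*m+1 : ℕ)) atTop atTop :=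
    Filter.tendsto_atTop_mono hmono tendsto_id
  have := (tendsto_const_div_atTop_nhds_zero_nat (SR 0)).comp h1
  apply this.congr
  intro m
  show SR 0 / ((2*m+1 : ℕ):ℝ) = _
  push_cast
  ring

lemma hasSum_odd_sq : HasSum (fun k : ℕ => 1 / (2*(k:ℝ)+1)^2) (π^2/8) := by
  set f : ℕ → ℝ := fun n => 1 / (n:ℝ)^2 with hf
  have htot : HasSum f (π^2/6) := hasSum_zeta_two
  have heven : HasSum (fun k => f (2*k)) (π^2/6/4) := by
    apply (htot.div_const 4).congr_fun
    intro k
    show (1:ℝ) / ((2*k : ℕ):ℝ)^2 = 1/(k:ℝ)^2 / 4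
    push_cast
    rw [mul_pow, div_div]
    ring_nf
  have hsucc : Summable (fun k : ℕ => (1:ℝ) / ((k:ℝ)+1)^2) := by
    have h := htot.summable.comp_injective Nat.succ_injective
    apply h.congr
    intro k
    show f (k+1) = _
    simp only [hf]
    push_cast
    ring
  have hodd_s : Summable (fun k : ℕ => f (2*k+1)) := by
    apply Summable.of_nonneg_of_le (fun k => by simp only [hf]; positivity) _ hsucc
    intro k
    simp only [hf]
    push_cast
    gcongr
    linarith [Nat.cast_nonneg (α := ℝ) k]
  obtain ⟨O, hO⟩ := hodd_s
  have huniq := htot.unique (heven.even_add_odd hO)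
  have hOval : O = π^2/8 := by linarith
  rw [hOval] at hO
  apply hO.congr_fun
  intro k
  simp only [hf]
  push_cast
  ring

lemma OmR_eq_range (m : ℕ) : OmR m = ∑ k ∈ Finset.range m, 1 / (2*(k:ℝ)+1)^2 := by
  induction m with
  | zero => simp [OmR]
  | succ m ih => rw [OmR_succ, ih, Finset.sum_range_succ]

lemma OmR_tendsto : Tendsto OmR atTop (nhds (π^2/8)) := by
  have h := hasSum_odd_sq.tendsto_sum_nat
  apply h.congr
  intro m
  exact (OmR_eq_range m).symm

lemma SR_zero : SR 0 = π^2/2 := by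
  have h1 : Tendsto (fun m => SR 0 - 4 * OmR m) atTop (nhds (SR 0 - 4 * (π^2/8))) :=
    (tendsto_const_nhds.sub (OmR_tendsto.const_mul 4))
  have h2 : Tendsto (fun m => SR 0 - 4 * OmR m) atTop (nhds 0) := by
    apply SR_tendsto.congr
    intro m
    exact SR_eq m
  have := tendsto_nhds_unique h1 h2
  linarith

lemma SR_val (m : ℕ) : SR m = π^2/2 - 4 * OmR m := by
  rw [SR_eq, SR_zero]

lemma choose_ne (a b : ℕ) (h : b ≤ a) : ((a.choose b : ℕ) : ℝ) ≠ 0 := by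
  exact_mod_cast (Nat.choose_pos h).ne'

lemma term_eq (m n : ℕ) :
    4^(n+1) / (((n:ℝ)+1)^2 * ((2*(n+1+m)).choose (n+1+m) : ℝ) * ((n+1+m).choose m : ℝ))
      = fA m n / ((2*m).choose m : ℝ) := by
  have e1 : (((2*(n+1+m)).choose (n+1+m) : ℕ) : ℝ) * (n+1+m)! * (n+1+m)! = ((2*(n+1+m))! : ℝ) := by
    have h : n+1+m ≤ 2*(n+1+m) := by omega
    have := Nat.choose_mul_factorial_mul_factorial h
    rw [show 2*(n+1+m) - (n+1+m) = n+1+m from by omega] at this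
    exact_mod_cast this
  have e2 : (((n+1+m).choose m : ℕ) : ℝ) * m ! * (n+1)! = ((n+1+m)! : ℝ) := by
    have h : m ≤ n+1+m := by omega
    have := Nat.choose_mul_factorial_mul_factorial h
    rw [show n+1+m - m = n+1 from by omega] at this
    exact_mod_cast this
  have e3 : (((2*m).choose m : ℕ) : ℝ) * m ! * m ! = ((2*m)! : ℝ) := by
    have h : m ≤ 2*m := by omega
    have := Nat.choose_mul_factorial_mul_factorial h
    rw [show 2*m - m = m from by omega] at this
    exact_mod_cast this
  unfold fA
  rw [← e1, ← e2, ← e3]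
  have h1 := factR_pos n
  have h2 := factR_pos m
  have h4 := factR_pos (n+1+m)
  have h5 := factR_pos (n+1)
  have c1 := choose_ne (2*(n+1+m)) (n+1+m) (by omega)
  have c2 := choose_ne (n+1+m) m (by omega)
  have c3 := choose_ne (2*m) m (by omega)
  have h6 : ((n:ℝ)+1) ≠ 0 := by positivity
  field_simp

theorem stmt_1' (m : ℕ) :
    ∑' n : ℕ, (4 : ℂ) ^ (n + 1) /
        (((n : ℂ) + 1) ^ 2 * (Nat.choose (2 * (n + 1 + m)) (n + 1 + m) : ℂ) *
          (Nat.choose (n + 1 + m) m : ℂ)) =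
      (1 / (Nat.choose (2 * m) m : ℂ)) *
        (3 * riemannZeta 2 - 4 * ∑ j ∈ Finset.Icc 1 m, 1 / (2 * (j : ℂ) - 1) ^ 2) := by
  have c3 : (((2*m).choose m : ℕ) : ℝ) ≠ 0 := choose_ne _ _ (by omega)
  have c3' : (((2*m).choose m : ℕ) : ℂ) ≠ 0 := by exact_mod_cast (Nat.choose_pos (by omega : m ≤ 2*m)).ne'
  have hterm : ∀ n : ℕ, (4 : ℂ) ^ (n + 1) /
        (((n : ℂ) + 1) ^ 2 * (Nat.choose (2 * (n + 1 + m)) (n + 1 + m) : ℂ) *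
          (Nat.choose (n + 1 + m) m : ℂ))
      = ((fA m n / (((2*m).choose m : ℕ) : ℝ) : ℝ) : ℂ) := by
    intro n
    rw [← term_eq m n]
    push_cast
    ring
  rw [tsum_congr hterm, ← Complex.ofReal_tsum]
  have h2 : ∑' n, fA m n / (((2*m).choose m : ℕ) : ℝ) = SR m / (((2*m).choose m : ℕ) : ℝ) := by
    rw [tsum_div_const]
    rfl
  rw [h2, SR_val, riemannZeta_two]
  have hodd : ∑ j ∈ Finset.Icc 1 m, 1 / (2 * (j : ℂ) - 1) ^ 2 = ((OmR m : ℝ) : ℂ) := by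
    rw [OmR]
    push_cast
    rfl
  rw [hodd]
  push_cast
  field_simp
  ring

theorem stmt_1 (m : ℕ) :
    ∑' n : ℕ, (4 : ℂ) ^ (n + 1) /
        (((n : ℂ) + 1) ^ 2 * (Nat.choose (2 * (n + 1 + m)) (n + 1 + m) : ℂ) *
          (Nat.choose (n + 1 + m) m : ℂ)) =
      (1 / (Nat.choose (2 * m) m : ℂ)) * (3 * riemannZeta 2 - 4 * oddH 2 m) := by
  simp only [oddH]
  exact stmt_1' m
end

section
/- ∑_{n=1}^∞ 4^n / (n² · C(2n, n)) = π²/2. -/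
set_option maxHeartbeats 1000000

open Real MeasureTheory intervalIntegral Filter Set

lemma prod_fact (m : ℕ) (n : ℕ) :
    m.factorial * ∏ j ∈ Finset.range (n+1), (m+1+j) = (m+n+1).factorial := by
  induction n with
  | zero => simp [Nat.factorial_succ, Nat.mul_comm]
  | succ n ih =>
    rw [Finset.prod_range_succ, ← mul_assoc, ih]
    have h2 : (m + (n+1) + 1).factorial = (m + 1 + (n+1)) * (m+n+1).factorial := by
      have h3 : m + (n+1) + 1 = (m+n+1) + 1 := by ring
      rw [h3, Nat.factorial_succ]
      congr 1
      ring
    rw [h2, Nat.mul_comm]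

lemma beta_nat (m n : ℕ) :
    ∫ x in (0:ℝ)..1, x ^ m * (1 - x) ^ n
      = (m.factorial * n.factorial : ℝ) / ((m + n + 1).factorial) := by
  have hu : 0 < Complex.re ((m : ℂ) + 1) := by
    simp only [Complex.add_re, Complex.natCast_re, Complex.one_re]
    positivity
  have h := Complex.betaIntegral_eval_nat_add_one_right hu n
  rw [Complex.betaIntegral] at h
  simp only [add_sub_cancel_right] at h
  have heq : ∀ x : ℝ, (x:ℂ) ^ (m:ℂ) * (1 - (x:ℂ)) ^ (n:ℂ)
      = ((x ^ m * (1-x) ^ n : ℝ) : ℂ) := by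
    intro x
    rw [Complex.cpow_natCast, Complex.cpow_natCast]
    push_cast
    ring
  rw [intervalIntegral.integral_congr (fun x _ => heq x), intervalIntegral.integral_ofReal] at h
  have hP : ((∏ j ∈ Finset.range (n+1), (m+1+j) : ℕ) : ℂ) = ∏ j ∈ Finset.range (n+1), ((m:ℂ)+1+(j:ℕ)) := by
    push_cast
    ring
  rw [← hP] at h
  have hPpos : 0 < ((∏ j ∈ Finset.range (n+1), (m+1+j) : ℕ) : ℝ) := by
    have : 0 < ∏ j ∈ Finset.range (n+1), (m+1+j) :=
      Finset.prod_pos (fun j _ => by omega)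
    exact_mod_cast this
  have hI : ∫ x in (0:ℝ)..1, x ^ m * (1-x) ^ n
      = (n.factorial : ℝ) / ((∏ j ∈ Finset.range (n+1), (m+1+j) : ℕ) : ℝ) := by
    have h4 : ((∫ x in (0:ℝ)..1, x ^ m * (1-x) ^ n : ℝ) : ℂ)
        = (((n.factorial : ℝ) / ((∏ j ∈ Finset.range (n+1), (m+1+j) : ℕ) : ℝ) : ℝ) : ℂ) := by
      push_cast
      exact_mod_cast h
    exact_mod_cast h4
  have hPR : ((m+n+1).factorial : ℝ)
      = (m.factorial : ℝ) * ((∏ j ∈ Finset.range (n+1), (m+1+j) : ℕ) : ℝ) := by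
    rw [← prod_fact m n]
    push_cast
    ring
  rw [hI, hPR]
  have hm : (m.factorial : ℝ) ≠ 0 := by positivity
  field_simp

lemma cb_bound : ∀ n : ℕ, 1 ≤ n → 16 ^ n ≤ 4 * n * (Nat.centralBinom n) ^ 2 := by
  intro n hn
  induction n with
  | zero => omega
  | succ n ih =>
    rcases Nat.lt_or_ge n 1 with h1 | h1
    · have : n = 0 := by omega
      subst this
      decide
    · have ih' := ih h1
      have hrec : (n+1) * Nat.centralBinom (n+1) = 2 * (2*n+1) * Nat.centralBinom n :=
        Nat.succ_mul_centralBinom_succ n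
      set c := Nat.centralBinom n with hc
      set c' := Nat.centralBinom (n+1) with hc'
      have key : (n+1)^2 * 16^(n+1) ≤ (n+1)^2 * (4*(n+1)*c'^2) := by
        have e : (n+1)^2 * (4*(n+1)*c'^2) = 4*(n+1)*((n+1)*c')^2 := by ring
        rw [e, hrec]
        have base : 4*n*(n+1) ≤ (2*n+1)^2 := by nlinarith
        calc (n+1)^2*16^(n+1) = (16*(n+1)^2)*16^n := by ring
          _ ≤ (16*(n+1)^2)*(4*n*c^2) := Nat.mul_le_mul_left _ ih'
          _ = (4*n*(n+1)) * (16*(n+1)*c^2) := by ring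
          _ ≤ (2*n+1)^2 * (16*(n+1)*c^2) := Nat.mul_le_mul_right _ base
          _ = 4*(n+1)*(2*(2*n+1)*c)^2 := by ring
      exact Nat.le_of_mul_le_mul_left key (by positivity)

noncomputable def aa (n : ℕ) : ℝ :=
  (4 : ℝ) ^ (n + 1) / (((n : ℝ) + 1) ^ 2 * (Nat.choose (2 * (n + 1)) (n + 1) : ℝ))

lemma choose_pos_real (n : ℕ) : (0:ℝ) < (Nat.choose (2 * (n + 1)) (n + 1) : ℝ) := by
  have := Nat.choose_pos (show n+1 ≤ 2*(n+1) by omega)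
  exact_mod_cast this

lemma aa_nonneg (n : ℕ) : 0 ≤ aa n := by
  have := choose_pos_real n
  unfold aa
  positivity

lemma aa_le (n : ℕ) : aa n ≤ 2 * ((n:ℝ)+1) ^ (-(3/2) : ℝ) := by
  have hcb := cb_bound (n+1) (by omega)
  have hC : Nat.centralBinom (n+1) = Nat.choose (2*(n+1)) (n+1) := rfl
  rw [hC] at hcb
  set C : ℝ := (Nat.choose (2 * (n + 1)) (n + 1) : ℝ) with hCdef
  have hC0 : (0:ℝ) < C := choose_pos_real n
  have hk0 : (0:ℝ) < (n:ℝ)+1 := by positivity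
  have hcbR : (16:ℝ)^(n+1) ≤ 4*((n:ℝ)+1)*C^2 := by
    have h' : ((16 ^ (n+1) : ℕ) : ℝ) ≤ ((4 * (n+1) * (Nat.choose (2*(n+1)) (n+1))^2 : ℕ) : ℝ) :=
      Nat.cast_le.mpr hcb
    push_cast at h'
    convert h' using 2 <;> push_cast <;> ring
  have h4 : (4:ℝ)^(n+1) ≤ 2 * Real.sqrt ((n:ℝ)+1) * C := by
    have h1 : ((4:ℝ)^(n+1))^2 ≤ (2 * Real.sqrt ((n:ℝ)+1) * C)^2 := by
      have e1 : (2 * Real.sqrt ((n:ℝ)+1) * C)^2 = 4*((n:ℝ)+1)*C^2 := by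
        rw [mul_pow, mul_pow, Real.sq_sqrt (le_of_lt hk0)]
        ring
      have e2 : ((4:ℝ)^(n+1))^2 = 16^(n+1) := by
        rw [← pow_mul, mul_comm (n+1) 2, pow_mul]
        norm_num
      rw [e1, e2]
      exact hcbR
    have h2 := Real.sqrt_le_sqrt h1
    rwa [Real.sqrt_sq (by positivity), Real.sqrt_sq (by positivity)] at h2
  have step1 : aa n ≤ (2 * Real.sqrt ((n:ℝ)+1) * C) / (((n:ℝ)+1)^2 * C) := by
    unfold aa
    rw [← hCdef]
    apply div_le_div_of_nonneg_right h4 (by positivity) |>.trans_eq rfl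
  have step2 : (2 * Real.sqrt ((n:ℝ)+1) * C) / (((n:ℝ)+1)^2 * C)
      = 2 * (Real.sqrt ((n:ℝ)+1) / ((n:ℝ)+1)^2) := by
    field_simp
  have step3 : Real.sqrt ((n:ℝ)+1) / ((n:ℝ)+1)^2 = ((n:ℝ)+1) ^ (-(3/2) : ℝ) := by
    rw [Real.sqrt_eq_rpow]
    rw [show (-(3/2) : ℝ) = 1/2 - 2 by norm_num, Real.rpow_sub hk0]
    norm_num [Real.rpow_natCast]
  calc aa n ≤ (2 * Real.sqrt ((n:ℝ)+1) * C) / (((n:ℝ)+1)^2 * C) := step1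
    _ = 2 * (Real.sqrt ((n:ℝ)+1) / ((n:ℝ)+1)^2) := step2
    _ = 2 * ((n:ℝ)+1) ^ (-(3/2) : ℝ) := by rw [step3]

lemma summable_aa : Summable aa := by
  have h1 : Summable (fun n : ℕ => ((n:ℝ)) ^ (-(3/2) : ℝ)) :=
    Real.summable_nat_rpow.mpr (by norm_num)
  have h2 : Summable (fun n : ℕ => 2 * ((n:ℝ)+1) ^ (-(3/2) : ℝ)) := by
    have h3 := ((summable_nat_add_iff 1).mpr h1).mul_left 2
    refine h3.congr (fun n => ?_)
    push_cast
    norm_num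
  exact Summable.of_nonneg_of_le aa_nonneg aa_le h2

open Real in
lemma basel1 : HasSum (fun k : ℕ => 1/((k:ℝ)+1)^2) (π^2/6) := by
  have h : HasSum (fun n : ℕ => 1/(n:ℝ)^2) (π^2/6 + ∑ i ∈ Finset.range 1, 1/(i:ℝ)^2) := by
    simpa using hasSum_zeta_two
  have h2 := (hasSum_nat_add_iff (f := fun n : ℕ => 1/(n:ℝ)^2) 1).mpr h
  refine h2.congr_fun (fun n => ?_)
  push_cast
  ring

open Real in
lemma basel_odd : HasSum (fun k : ℕ => 1/((2*(k:ℝ)+1))^2) (π^2/8) := by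
  have hinj : Function.Injective (fun k : ℕ => 2*k+1) := by
    intro a b hab
    simp only [] at hab
    omega
  have hsumg : Summable ((fun n : ℕ => 1/(n:ℝ)^2) ∘ (fun k : ℕ => 2*k+1)) :=
    hasSum_zeta_two.summable.comp_injective hinj
  have hS := hsumg.hasSum
  have he : HasSum (fun k : ℕ => (fun n : ℕ => 1/(n:ℝ)^2) (2*k)) (π^2/24) := by
    have h := hasSum_zeta_two.mul_left (1/4)
    have : π^2/24 = 1/4 * (π^2/6) := by ring
    rw [this]
    refine h.congr_fun (fun k => ?_)
    simp only
    push_cast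
    rw [show ((2:ℝ) * (k:ℝ))^2 = 4 * (k:ℝ)^2 from by ring, div_mul_div_comm, one_mul]
  have htot := HasSum.even_add_odd (f := fun n : ℕ => 1/(n:ℝ)^2) he hS
  have huniq : π^2/6 = π^2/24 + ∑' k, ((fun n : ℕ => 1/(n:ℝ)^2) ∘ (fun k : ℕ => 2*k+1)) k :=
    hasSum_zeta_two.unique htot
  have hval : ∑' k, ((fun n : ℕ => 1/(n:ℝ)^2) ∘ (fun k : ℕ => 2*k+1)) k = π^2/8 := by linarith
  rw [hval] at hS
  refine hS.congr_fun (fun k => ?_)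
  simp only [Function.comp]
  push_cast
  ring

open Real in
lemma alt_sum : HasSum (fun k : ℕ => (-1:ℝ)^k/((k:ℝ)+1)^2) (π^2/12) := by
  have he : HasSum (fun k : ℕ => (-1:ℝ)^(2*k)/(((2*k : ℕ):ℝ)+1)^2) (π^2/8) := by
    refine basel_odd.congr_fun (fun k => ?_)
    rw [pow_mul]
    push_cast
    norm_num
  have ho : HasSum (fun k : ℕ => (-1:ℝ)^(2*k+1)/(((2*k+1 : ℕ):ℝ)+1)^2) (-(π^2/24)) := by
    have h := basel1.mul_left (-(1/4))
    have e : -(π^2/24) = -(1/4) * (π^2/6) := by ring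
    rw [e]
    refine h.congr_fun (fun k => ?_)
    rw [pow_succ, pow_mul]
    push_cast
    have h1 : ((k:ℝ)+1) ≠ 0 := by positivity
    have h2 : (2*(k:ℝ)+1+1) ≠ 0 := by positivity
    field_simp
    ring
  have h := HasSum.even_add_odd (f := fun k : ℕ => (-1:ℝ)^k/((k:ℝ)+1)^2) he ho
  rw [show π^2/8 + -(π^2/24) = π^2/12 by ring] at h
  exact h

open Real in
lemma intervalIntegrable_pow_log (k : ℕ) :
    IntervalIntegrable (fun t : ℝ => t ^ k * Real.log t) MeasureTheory.volume 0 1 := by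
  have hg : IntervalIntegrable (fun t : ℝ => 2 * t ^ (-(1/2) : ℝ)) MeasureTheory.volume 0 1 :=
    (intervalIntegrable_rpow' (by norm_num)).const_mul 2
  refine hg.mono_fun ?_ ?_
  · exact ((measurable_id.pow_const k).mul Real.measurable_log).aestronglyMeasurable
  · rw [Set.uIoc_of_le (zero_le_one)]
    refine (MeasureTheory.ae_restrict_iff' measurableSet_Ioc).mpr ?_
    filter_upwards with x hx
    rcases hx with ⟨hx0, hx1⟩
    have hxr : (0:ℝ) < x ^ (-(1/2) : ℝ) := Real.rpow_pos_of_pos hx0 _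
    have hlog : Real.log x ≤ 0 := Real.log_nonpos (le_of_lt hx0) hx1
    have h1 : ‖x ^ k * Real.log x‖ ≤ ‖Real.log x‖ := by
      rw [norm_mul]
      have : ‖x ^ k‖ ≤ 1 := by
        rw [norm_pow, Real.norm_of_nonneg (le_of_lt hx0)]
        exact pow_le_one₀ (le_of_lt hx0) hx1
      calc ‖x^k‖ * ‖Real.log x‖ ≤ 1 * ‖Real.log x‖ :=
            mul_le_mul_of_nonneg_right this (norm_nonneg _)
        _ = ‖Real.log x‖ := one_mul _
    refine h1.trans ?_
    rw [Real.norm_of_nonpos hlog, Real.norm_of_nonneg (by positivity)]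
    have hlogy : Real.log (x ^ (-(1/2):ℝ)) = -(1/2) * Real.log x := Real.log_rpow hx0 _
    have hle : Real.log (x ^ (-(1/2):ℝ)) ≤ x ^ (-(1/2):ℝ) - 1 :=
      Real.log_le_sub_one_of_pos hxr
    nlinarith [hxr]

open Real in
lemma integral_pow_log (k : ℕ) :
    ∫ t in (0:ℝ)..1, t ^ k * Real.log t = -(1/((k:ℝ)+1)^2) := by
  set G : ℝ → ℝ := fun t => t^(k+1) * Real.log t/((k:ℝ)+1) - t^(k+1)/((k:ℝ)+1)^2 with hG
  have hcont : Continuous G := by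
    have hG2 : G = fun t => (t^k * (t * Real.log t))/((k:ℝ)+1) - t^(k+1)/((k:ℝ)+1)^2 := by
      funext t
      simp only [hG]
      ring
    rw [hG2]
    exact (((continuous_pow k).mul Real.continuous_mul_log).div_const _).sub
      ((continuous_pow (k+1)).div_const _)
  have hderiv : ∀ x ∈ Set.Ioo (0:ℝ) 1, HasDerivAt G (x ^ k * Real.log x) x := by
    intro x hx
    have hx0 : x ≠ 0 := ne_of_gt hx.1
    have hp := hasDerivAt_pow (k+1) x
    have hl := Real.hasDerivAt_log hx0
    have h := ((hp.mul hl).div_const ((k:ℝ)+1)).sub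
      ((hasDerivAt_pow (k+1) x).div_const (((k:ℝ)+1)^2))
    refine (show HasDerivAt G _ x from h).congr_deriv ?_
    have hk1 : ((k:ℝ)+1) ≠ 0 := by positivity
    push_cast
    field_simp
    ring
  have hint := intervalIntegrable_pow_log k
  have := intervalIntegral.integral_eq_sub_of_hasDeriv_right_of_le zero_le_one
    hcont.continuousOn (fun x hx => (hderiv x hx).hasDerivWithinAt) hint
  rw [this]
  simp only [hG]
  rw [Real.log_one, Real.log_zero]
  norm_num

open Real in
lemma intervalIntegrable_affine_pow_log (k : ℕ) :
    IntervalIntegrable (fun x : ℝ => (2*x-1) ^ k * Real.log (2*x-1))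
      MeasureTheory.volume (1/2) 1 := by
  have h1 := (intervalIntegrable_pow_log k).comp_sub_right 1
  have h2 := h1.comp_mul_left (c := 2) enorm_ne_top enorm_ne_top
  norm_num at h2
  exact h2

open Real in
lemma integral_affine_pow_log (k : ℕ) :
    ∫ x in (1/2:ℝ)..1, (2*x-1) ^ k * Real.log (2*x-1) = -(1/(2*((k:ℝ)+1)^2)) := by
  have h := intervalIntegral.integral_comp_mul_sub (a := (1/2:ℝ)) (b := 1)
    (fun t : ℝ => t ^ k * Real.log t) (two_ne_zero) 1
  norm_num at h
  rw [h, integral_pow_log k]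
  norm_num
  ring

noncomputable def FF (n : ℕ) : ℝ → ℝ :=
  fun x => ((4:ℝ)^(n+1)/((n:ℝ)+1)) * (x^n * (1-x)^(n+1))

noncomputable def G1 (k : ℕ) : ℝ → ℝ :=
  fun x => ((2:ℝ)^(k+2)/((k:ℝ)+1)) * x^k

noncomputable def G2 (k : ℕ) : ℝ → ℝ :=
  fun x => ((-4:ℝ) * (-1:ℝ)^k) * ((2*x-1)^k * Real.log (2*x-1))

lemma FF_cont (n : ℕ) : Continuous (FF n) :=
  continuous_const.mul ((continuous_pow n).mul ((continuous_const.sub continuous_id).pow (n+1)))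

lemma G1_cont (k : ℕ) : Continuous (G1 k) :=
  continuous_const.mul (continuous_pow k)

lemma FF_nonneg (n : ℕ) {x : ℝ} (hx0 : 0 ≤ x) (hx1 : x ≤ 1) : 0 ≤ FF n x := by
  unfold FF
  have h1 : (0:ℝ) ≤ 1 - x := by linarith
  have h2 : (0:ℝ) ≤ (4:ℝ)^(n+1)/((n:ℝ)+1) := by positivity
  exact mul_nonneg h2 (mul_nonneg (pow_nonneg hx0 _) (pow_nonneg h1 _))

lemma intFF (n : ℕ) : ∫ x in Set.Ioc (0:ℝ) 1, FF n x = aa n := by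
  rw [← intervalIntegral.integral_of_le zero_le_one]
  unfold FF
  rw [intervalIntegral.integral_const_mul, beta_nat n (n+1)]
  have he : n + (n+1) + 1 = 2*(n+1) := by omega
  rw [he]
  have hCfact : (Nat.choose (2*(n+1)) (n+1)) * (Nat.factorial (n+1)) * (Nat.factorial (n+1))
      = Nat.factorial (2*(n+1)) := by
    have h := Nat.choose_mul_factorial_mul_factorial (show n+1 ≤ 2*(n+1) by omega)
    simpa [show 2*(n+1)-(n+1) = n+1 by omega] using h
  have hCR : ((Nat.factorial (2*(n+1)) : ℕ) : ℝ)
      = (Nat.choose (2*(n+1)) (n+1) : ℝ) * (Nat.factorial (n+1) : ℝ) * (Nat.factorial (n+1) : ℝ) := by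
    rw [← hCfact]
    push_cast
    ring
  have hfact1 : ((Nat.factorial (n+1) : ℕ) : ℝ) = ((n:ℝ)+1) * (Nat.factorial n : ℝ) := by
    rw [Nat.factorial_succ]
    push_cast
    ring
  unfold aa
  rw [hCR, hfact1]
  have h1 : (Nat.factorial n : ℝ) ≠ 0 := by positivity
  have h2 : (Nat.choose (2*(n+1)) (n+1) : ℝ) ≠ 0 := ne_of_gt (choose_pos_real n)
  have h3 : ((n:ℝ)+1) ≠ 0 := by positivity
  field_simp

open Real in
lemma hasSum_FF {x : ℝ} (hx0 : 0 < x) (hx1 : x < 1) (hxh : x ≠ 1/2) :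
    HasSum (fun n => FF n x) ((1/x) * (-2 * Real.log |1-2*x|)) := by
  have hne : (1-2*x) ≠ 0 := by
    intro h
    apply hxh
    linarith
  have hsq : 0 < (1-2*x)*(1-2*x) := mul_self_pos.mpr hne
  have hy0 : 0 < 4*x*(1-x) := by nlinarith
  have hy1 : 4*x*(1-x) < 1 := by nlinarith
  have habs : |4*x*(1-x)| < 1 := by
    rw [abs_of_pos hy0]
    exact hy1
  have h := (Real.hasSum_pow_div_log_of_abs_lt_one habs).mul_left (1/x)
  have hval : (1/x) * -Real.log (1 - 4*x*(1-x)) = (1/x) * (-2 * Real.log |1-2*x|) := by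
    have e1 : 1 - 4*x*(1-x) = |1-2*x|^2 := by
      rw [sq_abs]
      ring
    rw [e1, Real.log_pow]
    push_cast
    ring
  rw [hval] at h
  refine h.congr_fun (fun n => ?_)
  unfold FF
  have hxne : x ≠ 0 := ne_of_gt hx0
  have hn : ((n:ℝ)+1) ≠ 0 := by positivity
  rw [mul_pow, mul_pow]
  field_simp
  ring

open Real in
lemma hasSum_G1 {x : ℝ} (hx0 : 0 < x) (hx1 : x < 1/2) :
    HasSum (fun k => G1 k x) ((1/x) * (-2 * Real.log |1-2*x|)) := by
  have habs : |2*x| < 1 := by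
    rw [abs_of_pos (by linarith)]
    linarith
  have h := (Real.hasSum_pow_div_log_of_abs_lt_one habs).mul_left (2/x)
  have hval : (2/x) * -Real.log (1-2*x) = (1/x) * (-2 * Real.log |1-2*x|) := by
    rw [abs_of_pos (by linarith : (0:ℝ) < 1-2*x)]
    ring
  rw [hval] at h
  refine h.congr_fun (fun k => ?_)
  unfold G1
  have hxne : x ≠ 0 := ne_of_gt hx0
  have hk : ((k:ℝ)+1) ≠ 0 := by positivity
  field_simp
  ring

open Real in
lemma hasSum_G2 {x : ℝ} (hx0 : 1/2 < x) (hx1 : x < 1) :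
    HasSum (fun k => G2 k x) ((1/x) * (-2 * Real.log |1-2*x|)) := by
  have ht0 : 0 < 2*x-1 := by linarith
  have ht1 : 2*x-1 < 1 := by linarith
  have habs : |(-(2*x-1))| < 1 := by
    rw [abs_neg, abs_of_pos ht0]
    exact ht1
  have h := (hasSum_geometric_of_abs_lt_one habs).mul_left ((-4) * Real.log (2*x-1))
  have hval : ((-4) * Real.log (2*x-1)) * (1 - -(2*x-1))⁻¹
      = (1/x) * (-2 * Real.log |1-2*x|) := by
    have e1 : |1-2*x| = 2*x-1 := by
      rw [abs_of_neg (by linarith : (1-2*x) < 0)]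
      ring
    rw [e1, show (1 - -(2*x-1)) = 2*x by ring]
    have hxne : x ≠ 0 := by linarith
    field_simp
    ring
  rw [hval] at h
  refine h.congr_fun (fun k => ?_)
  unfold G2
  rw [neg_pow (2*x-1) k]
  ring

lemma intG1 (k : ℕ) : ∫ x in Set.Ioc (0:ℝ) (1/2), G1 k x = 2/((k:ℝ)+1)^2 := by
  rw [← intervalIntegral.integral_of_le (by norm_num : (0:ℝ) ≤ 1/2)]
  unfold G1
  rw [intervalIntegral.integral_const_mul, integral_pow]
  have h2 : ((2:ℝ))^(k+1) ≠ 0 := by positivity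
  have hk : ((k:ℝ)+1) ≠ 0 := by positivity
  rw [show ((1:ℝ)/2)^(k+1) = 1/2^(k+1) from by rw [div_pow, one_pow]]
  rw [show ((2:ℝ))^(k+2) = 2^(k+1)*2 from by rw [pow_succ]]
  field_simp
  ring

lemma intG2 (k : ℕ) : ∫ x in Set.Ioc (1/2:ℝ) 1, G2 k x = 2*(-1:ℝ)^k/((k:ℝ)+1)^2 := by
  rw [← intervalIntegral.integral_of_le (by norm_num : (1/2:ℝ) ≤ 1)]
  unfold G2
  rw [intervalIntegral.integral_const_mul, integral_affine_pow_log k]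
  field_simp
  ring

lemma intG2norm (k : ℕ) : ∫ x in Set.Ioc (1/2:ℝ) 1, ‖G2 k x‖ = 2/((k:ℝ)+1)^2 := by
  have hcongr : ∀ x ∈ Set.Ioc (1/2:ℝ) 1, ‖G2 k x‖ = ((-4:ℝ)) * ((2*x-1)^k * Real.log (2*x-1)) := by
    intro x hx
    have ht0 : (0:ℝ) ≤ 2*x-1 := by
      have := hx.1
      linarith
    have ht1 : 2*x-1 ≤ 1 := by
      have := hx.2
      linarith
    have hlog : Real.log (2*x-1) ≤ 0 := Real.log_nonpos ht0 ht1
    unfold G2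
    rw [norm_mul, norm_mul, norm_mul]
    rw [Real.norm_of_nonneg (pow_nonneg ht0 k), Real.norm_of_nonpos hlog]
    simp only [norm_neg, Real.norm_ofNat, norm_pow, norm_neg, norm_one, one_pow]
    ring
  rw [MeasureTheory.setIntegral_congr_fun measurableSet_Ioc hcongr]
  rw [← intervalIntegral.integral_of_le (by norm_num : (1/2:ℝ) ≤ 1)]
  rw [intervalIntegral.integral_const_mul, integral_affine_pow_log k]
  field_simp
  ring

open MeasureTheory in
lemma ae_ne' (c : ℝ) : ∀ᵐ x : ℝ, x ≠ c := by
  refine MeasureTheory.mem_ae_iff.mpr ?_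
  have h : {x : ℝ | x ≠ c}ᶜ = {c} := by
    ext y
    simp
  rw [h]
  exact MeasureTheory.measure_singleton c

open MeasureTheory in
lemma hnormG1 (k : ℕ) : ∫ x in Set.Ioc (0:ℝ) (1/2), ‖G1 k x‖ = 2/((k:ℝ)+1)^2 := by
  rw [← intG1 k]
  refine setIntegral_congr_fun measurableSet_Ioc (fun x hx => ?_)
  refine Real.norm_of_nonneg ?_
  unfold G1
  have h1 : (0:ℝ) ≤ x := le_of_lt hx.1
  positivity

open MeasureTheory in
lemma hasSumA : HasSum (fun n => ∫ x in Set.Ioc (0:ℝ) (1/2), FF n x) (Real.pi^2/3) := by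
  have hInt : ∀ n, Integrable (FF n) (volume.restrict (Set.Ioc (0:ℝ) (1/2))) :=
    fun n => (FF_cont n).integrableOn_Ioc
  have hnorm : ∀ n, ∫ x in Set.Ioc (0:ℝ) (1/2), ‖FF n x‖
      = ∫ x in Set.Ioc (0:ℝ) (1/2), FF n x := by
    intro n
    refine setIntegral_congr_fun measurableSet_Ioc (fun x hx => ?_)
    exact Real.norm_of_nonneg (FF_nonneg n (le_of_lt hx.1) (by linarith [hx.2]))
  have hbound : ∀ n, ∫ x in Set.Ioc (0:ℝ) (1/2), FF n x ≤ aa n := by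
    intro n
    rw [← intFF n]
    refine setIntegral_mono_set ((FF_cont n).integrableOn_Ioc)
      ((ae_restrict_iff' measurableSet_Ioc).mpr (Filter.Eventually.of_forall
        (fun x hx => FF_nonneg n (le_of_lt hx.1) hx.2)))
      (HasSubset.Subset.eventuallyLE (Set.Ioc_subset_Ioc_right (by norm_num)))
  have hsumnorm : Summable (fun n => ∫ x in Set.Ioc (0:ℝ) (1/2), ‖FF n x‖) := by
    refine Summable.of_nonneg_of_le (fun n => ?_) (fun n => ?_) summable_aa
    · exact setIntegral_nonneg measurableSet_Ioc (fun x _ => norm_nonneg _)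
    · rw [hnorm n]
      exact hbound n
  have hswap := hasSum_integral_of_summable_integral_norm hInt hsumnorm
  have hae : ∀ᵐ x ∂(volume.restrict (Set.Ioc (0:ℝ) (1/2))), (∑' n, FF n x) = ∑' k, G1 k x := by
    filter_upwards [ae_restrict_mem measurableSet_Ioc, ae_restrict_of_ae (ae_ne' (1/2:ℝ))]
      with x hx hne
    have hx0 := hx.1
    have hxlt : x < 1/2 := lt_of_le_of_ne hx.2 hne
    rw [(hasSum_FF hx0 (by linarith) hne).tsum_eq, (hasSum_G1 hx0 hxlt).tsum_eq]
  rw [integral_congr_ae hae] at hswap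
  have hbasel : HasSum (fun k : ℕ => 2/((k:ℝ)+1)^2) (Real.pi^2/3) := by
    have h := basel1.mul_left 2
    rw [show (2:ℝ) * (Real.pi^2/6) = Real.pi^2/3 by ring] at h
    exact h.congr_fun (fun k => by ring)
  have hsumnormG1 : Summable (fun k => ∫ x in Set.Ioc (0:ℝ) (1/2), ‖G1 k x‖) :=
    hbasel.summable.congr (fun k => (hnormG1 k).symm)
  have hswap2 := hasSum_integral_of_summable_integral_norm
    (F := G1) (μ := volume.restrict (Set.Ioc (0:ℝ) (1/2)))
    (fun k => (G1_cont k).integrableOn_Ioc) hsumnormG1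
  simp_rw [intG1] at hswap2
  have hfin : (∫ x in Set.Ioc (0:ℝ) (1/2), ∑' k, G1 k x) = Real.pi^2/3 := hswap2.unique hbasel
  rwa [hfin] at hswap

open MeasureTheory in
lemma hasSumB : HasSum (fun n => ∫ x in Set.Ioc (1/2:ℝ) 1, FF n x) (Real.pi^2/6) := by
  have hInt : ∀ n, Integrable (FF n) (volume.restrict (Set.Ioc (1/2:ℝ) 1)) :=
    fun n => (FF_cont n).integrableOn_Ioc
  have hnorm : ∀ n, ∫ x in Set.Ioc (1/2:ℝ) 1, ‖FF n x‖
      = ∫ x in Set.Ioc (1/2:ℝ) 1, FF n x := by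
    intro n
    refine setIntegral_congr_fun measurableSet_Ioc (fun x hx => ?_)
    exact Real.norm_of_nonneg (FF_nonneg n (by linarith [hx.1]) hx.2)
  have hbound : ∀ n, ∫ x in Set.Ioc (1/2:ℝ) 1, FF n x ≤ aa n := by
    intro n
    rw [← intFF n]
    refine setIntegral_mono_set ((FF_cont n).integrableOn_Ioc)
      ((ae_restrict_iff' measurableSet_Ioc).mpr (Filter.Eventually.of_forall
        (fun x hx => FF_nonneg n (le_of_lt hx.1) hx.2)))
      (HasSubset.Subset.eventuallyLE (Set.Ioc_subset_Ioc_left (by norm_num)))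
  have hsumnorm : Summable (fun n => ∫ x in Set.Ioc (1/2:ℝ) 1, ‖FF n x‖) := by
    refine Summable.of_nonneg_of_le (fun n => ?_) (fun n => ?_) summable_aa
    · exact setIntegral_nonneg measurableSet_Ioc (fun x _ => norm_nonneg _)
    · rw [hnorm n]
      exact hbound n
  have hswap := hasSum_integral_of_summable_integral_norm hInt hsumnorm
  have hae : ∀ᵐ x ∂(volume.restrict (Set.Ioc (1/2:ℝ) 1)), (∑' n, FF n x) = ∑' k, G2 k x := by
    filter_upwards [ae_restrict_mem measurableSet_Ioc, ae_restrict_of_ae (ae_ne' (1:ℝ))]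
      with x hx hne
    have hx0 : (1:ℝ)/2 < x := hx.1
    have hxlt : x < 1 := lt_of_le_of_ne hx.2 hne
    rw [(hasSum_FF (by linarith) hxlt (ne_of_gt hx0)).tsum_eq, (hasSum_G2 hx0 hxlt).tsum_eq]
  rw [integral_congr_ae hae] at hswap
  have hIntG2 : ∀ k, Integrable (G2 k) (volume.restrict (Set.Ioc (1/2:ℝ) 1)) := by
    intro k
    have h := (intervalIntegrable_affine_pow_log k).const_mul ((-4:ℝ) * (-1:ℝ)^k)
    exact h.1
  have hbasel2 : HasSum (fun k : ℕ => 2/((k:ℝ)+1)^2) (Real.pi^2/3) := by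
    have h := basel1.mul_left 2
    rw [show (2:ℝ) * (Real.pi^2/6) = Real.pi^2/3 by ring] at h
    exact h.congr_fun (fun k => by ring)
  have hsumnormG2 : Summable (fun k => ∫ x in Set.Ioc (1/2:ℝ) 1, ‖G2 k x‖) :=
    hbasel2.summable.congr (fun k => (intG2norm k).symm)
  have hswap2 := hasSum_integral_of_summable_integral_norm
    (F := G2) (μ := volume.restrict (Set.Ioc (1/2:ℝ) 1)) hIntG2 hsumnormG2
  simp_rw [intG2] at hswap2
  have halt : HasSum (fun k : ℕ => 2*(-1:ℝ)^k/((k:ℝ)+1)^2) (Real.pi^2/6) := by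
    have h := alt_sum.mul_left 2
    rw [show (2:ℝ) * (Real.pi^2/12) = Real.pi^2/6 by ring] at h
    exact h.congr_fun (fun k => by ring)
  have hfin : (∫ x in Set.Ioc (1/2:ℝ) 1, ∑' k, G2 k x) = Real.pi^2/6 := hswap2.unique halt
  rwa [hfin] at hswap

open scoped BigOperators

theorem stmt_2 :
    ∑' n : ℕ, (4 : ℝ) ^ (n + 1) /
        (((n : ℝ) + 1) ^ 2 * (Nat.choose (2 * (n + 1)) (n + 1) : ℝ)) =
      Real.pi ^ 2 / 2 := by
  have h := hasSumA.add hasSumB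
  have hsplit : ∀ n, (∫ x in Set.Ioc (0:ℝ) (1/2), FF n x)
      + (∫ x in Set.Ioc (1/2:ℝ) 1, FF n x) = aa n := by
    intro n
    rw [← intFF n,
      ← MeasureTheory.setIntegral_union (Set.Ioc_disjoint_Ioc_of_le le_rfl) measurableSet_Ioc
        ((FF_cont n).integrableOn_Ioc) ((FF_cont n).integrableOn_Ioc),
      Set.Ioc_union_Ioc_eq_Ioc (by norm_num) (by norm_num)]
  have h2 : HasSum aa (Real.pi^2/2) := by
    rw [show Real.pi^2/2 = Real.pi^2/3 + Real.pi^2/6 by ring]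
    exact h.congr_fun (fun n => (hsplit n).symm)
  exact h2.tsum_eq
end

section
/- ∑_{n=1}^∞ H_n / n² = 2 ζ(3). -/
open scoped BigOperators

open Finset Filter Topology


noncomputable def fa (j k : ℕ) : ℝ := 1/((j+1)*(k+1)*(j+k+2))
noncomputable def fb (j k : ℕ) : ℝ := 1/((j+1)*(j+k+2)^2)

lemma fa_eq_fb (j k : ℕ) : fa j k = fb j k + fb k j := by
  unfold fa fb
  have h1 : ((j:ℝ)+1) > 0 := by positivity
  have h2 : ((k:ℝ)+1) > 0 := by positivity
  have h3 : ((j:ℝ)+(k:ℝ)+2) > 0 := by positivity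
  have hkj : ((k:ℝ)+(j:ℝ)+2) = (j:ℝ)+(k:ℝ)+2 := by ring
  push_cast
  rw [hkj]
  field_simp
  ring

lemma partial_sum_fa (j K : ℕ) :
    ∑ k ∈ range K, fa j k
      = ((harmonic (j+1) : ℝ) + (harmonic K : ℝ) - (harmonic (j+1+K) : ℝ)) / (j+1)^2 := by
  induction K with
  | zero => simp
  | succ K ih =>
    rw [Finset.sum_range_succ, ih]
    have hs1 : harmonic (K+1) = harmonic K + (↑(K+1) : ℚ)⁻¹ := harmonic_succ K
    have hs2 : harmonic (j+1+(K+1)) = harmonic (j+1+K) + (↑(j+1+K+1) : ℚ)⁻¹ := by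
      rw [show j+1+(K+1) = (j+1+K)+1 by ring]; exact harmonic_succ _
    rw [hs1, hs2]
    unfold fa
    push_cast
    have h1 : ((j:ℝ)+1) ≠ 0 := by positivity
    have h2 : ((K:ℝ)+1) ≠ 0 := by positivity
    have h3 : ((j:ℝ)+(K:ℝ)+2) ≠ 0 := by positivity
    field_simp
    ring

lemma harmonic_mono : Monotone (fun n => (harmonic n : ℝ)) := by
  apply monotone_nat_of_le_succ
  intro n
  rw [harmonic_succ]
  push_cast
  have : (0:ℝ) ≤ ((n:ℝ)+1)⁻¹ := by positivity
  linarith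

lemma harmonic_diff_le (j K : ℕ) :
    (harmonic (j+K) : ℝ) - (harmonic K : ℝ) ≤ j / (K+1) := by
  induction j with
  | zero => simp
  | succ j ih =>
    have hs : harmonic (j+1+K) = harmonic (j+K) + (↑(j+K+1) : ℚ)⁻¹ := by
      rw [show j+1+K = (j+K)+1 by ring]; exact harmonic_succ _
    rw [hs]
    push_cast
    have h1 : ((j:ℝ)+(K:ℝ)+1)⁻¹ ≤ ((K:ℝ)+1)⁻¹ := by
      apply inv_anti₀ (by positivity)
      have : (0:ℝ) ≤ j := Nat.cast_nonneg j
      linarith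
    have h2 : ((K:ℝ)+1)⁻¹ = 1/((K:ℝ)+1) := by rw [one_div]
    have h3 : ((j:ℝ)+1)/((K:ℝ)+1) = (j:ℝ)/((K:ℝ)+1) + 1/((K:ℝ)+1) := by ring
    rw [h3]
    linarith [ih]

lemma hasSum_fa (j : ℕ) :
    HasSum (fun k => fa j k) ((harmonic (j+1) : ℝ) / (j+1)^2) := by
  have hnn : ∀ k, 0 ≤ fa j k := by intro k; unfold fa; positivity
  have hsum : Summable (fun k => fa j k) := by
    apply summable_of_sum_range_le hnn
    intro K
    rw [partial_sum_fa]
    have h1 : (harmonic K : ℝ) ≤ (harmonic (j+1+K) : ℝ) := by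
      apply harmonic_mono; omega
    have h2 : (0:ℝ) < ((j:ℝ)+1)^2 := by positivity
    have h3 : (harmonic (j+1) : ℝ) + (harmonic K : ℝ) - (harmonic (j+1+K) : ℝ)
        ≤ (harmonic (j+1) : ℝ) := by linarith
    exact div_le_div_of_nonneg_right h3 h2.le
  have htend : Tendsto (fun K => ∑ k ∈ range K, fa j k) atTop
      (𝓝 ((harmonic (j+1) : ℝ) / (j+1)^2)) := by
    simp only [partial_sum_fa]
    have hdiff : Tendsto (fun K => (harmonic K : ℝ) - (harmonic (j+1+K) : ℝ)) atTop (𝓝 0) := by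
      have hb : ∀ K : ℕ, |(harmonic K : ℝ) - (harmonic (j+1+K) : ℝ)| ≤ ((j:ℝ)+1) / (K+1) := by
        intro K
        rw [abs_sub_comm, abs_of_nonneg (by linarith [harmonic_mono (show K ≤ j+1+K by omega)])]
        have := harmonic_diff_le (j+1) K
        push_cast at this ⊢
        linarith
      apply squeeze_zero_norm hb
      exact ((tendsto_const_div_atTop_nhds_zero_nat ((j:ℝ)+1)).comp
        (tendsto_add_atTop_nat 1)).congr fun K => by simp only [Function.comp]; push_cast; ring_nf
    have : Tendsto (fun K => (harmonic (j+1) : ℝ) + ((harmonic K : ℝ) - (harmonic (j+1+K) : ℝ)))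
        atTop (𝓝 ((harmonic (j+1) : ℝ) + 0)) := tendsto_const_nhds.add hdiff
    rw [add_zero] at this
    exact (this.div_const _).congr (fun K => by ring_nf)
  exact (hsum.hasSum_iff_tendsto_nat).mpr htend

lemma harmonic_le_two_sqrt (n : ℕ) : (harmonic n : ℝ) ≤ 2 * Real.sqrt n := by
  induction n with
  | zero => simp
  | succ n ih =>
    rw [harmonic_succ]
    push_cast
    have ha : Real.sqrt n ^ 2 = n := Real.sq_sqrt (Nat.cast_nonneg n)
    have hb : Real.sqrt (n+1) ^ 2 = (n:ℝ)+1 := Real.sq_sqrt (by positivity)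
    have ha0 : 0 ≤ Real.sqrt n := Real.sqrt_nonneg n
    have hb0 : 0 ≤ Real.sqrt (n+1) := Real.sqrt_nonneg _
    have hble : Real.sqrt ((n:ℝ)+1) ≤ (n:ℝ)+1 := by
      have h := Real.sqrt_le_sqrt (show (n:ℝ)+1 ≤ ((n:ℝ)+1)^2 by nlinarith)
      rwa [Real.sqrt_sq (by positivity)] at h
    have key : ((n:ℝ)+1)⁻¹ ≤ 2 * Real.sqrt ((n:ℝ)+1) - 2 * Real.sqrt n := by
      have h1 : (Real.sqrt ((n:ℝ)+1) - Real.sqrt n) * (Real.sqrt ((n:ℝ)+1) + Real.sqrt n) = 1 := by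
        push_cast at ha hb; nlinarith
      have h2 : Real.sqrt ((n:ℝ)+1) + Real.sqrt n ≤ 2 * ((n:ℝ)+1) := by
        have : Real.sqrt (n:ℝ) ≤ Real.sqrt ((n:ℝ)+1) := Real.sqrt_le_sqrt (by linarith)
        push_cast at hble ⊢
        linarith
      have h3 : 0 < Real.sqrt ((n:ℝ)+1) + Real.sqrt n := by
        have : (0:ℝ) < Real.sqrt ((n:ℝ)+1) := Real.sqrt_pos.mpr (by positivity)
        linarith
      rw [inv_eq_one_div]
      rw [div_le_iff₀ (by positivity)]
      nlinarith
    push_cast at ih key ⊢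
    linarith

noncomputable def ff (n : ℕ) : ℝ := (harmonic (n+1) : ℝ) / ((n:ℝ)+1)^2
noncomputable def vv (m : ℕ) : ℝ := (harmonic (m+1) : ℝ) / ((m:ℝ)+2)^2
noncomputable def zz (n : ℕ) : ℝ := 1 / ((n:ℝ)+1)^3

lemma summable_ff : Summable ff := by
  have hg : Summable (fun n : ℕ => 2 * (1 / ((n:ℝ)+1) ^ ((3:ℝ)/2))) := by
    apply Summable.mul_left
    have := (Real.summable_one_div_nat_rpow (p := (3:ℝ)/2)).mpr (by norm_num)
    have h2 := (summable_nat_add_iff 1).mpr this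
    exact h2.congr fun n => by push_cast; ring_nf
  apply Summable.of_nonneg_of_le ?_ ?_ hg
  · intro n; unfold ff
    have := harmonic_pos (n := n+1) (by omega)
    have h2 : (0:ℝ) < (harmonic (n+1) : ℝ) := by exact_mod_cast this
    positivity
  · intro n
    unfold ff
    have hb := harmonic_le_two_sqrt (n+1)
    have hpos : (0:ℝ) < ((n:ℝ)+1)^2 := by positivity
    have h1 : ff n ≤ 2 * Real.sqrt ((n:ℝ)+1) / ((n:ℝ)+1)^2 := by
      unfold ff
      apply div_le_div_of_nonneg_right ?_ hpos.le
      push_cast at hb ⊢; exact hb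
    have h2 : 2 * Real.sqrt ((n:ℝ)+1) / ((n:ℝ)+1)^2 = 2 * (1 / ((n:ℝ)+1) ^ ((3:ℝ)/2)) := by
      rw [Real.sqrt_eq_rpow]
      have hx : (0:ℝ) < (n:ℝ)+1 := by positivity
      rw [show ((n:ℝ)+1)^2 = ((n:ℝ)+1) ^ (2:ℝ) by rw [← Real.rpow_natCast ((n:ℝ)+1) 2]; norm_num]
      rw [mul_div_assoc, ← Real.rpow_sub hx]
      rw [show (1:ℝ)/2 - 2 = -(3/2) by norm_num, Real.rpow_neg hx.le, one_div]
    unfold ff at h1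
    rw [← h2]; exact h1

lemma summable_vv : Summable vv := by
  apply Summable.of_nonneg_of_le ?_ ?_ ((summable_nat_add_iff 1).mpr summable_ff)
  · intro m; unfold vv
    have := harmonic_pos (n := m+1) (by omega)
    have h2 : (0:ℝ) < (harmonic (m+1) : ℝ) := by exact_mod_cast this
    positivity
  · intro m
    unfold vv ff
    push_cast
    rw [show ((m:ℝ)+1+1) = (m:ℝ)+2 by ring]
    apply div_le_div_of_nonneg_right ?_ (by positivity)
    simpa using harmonic_mono (show m+1 ≤ m+1+1 by omega)

lemma summable_zz : Summable zz := by
  have := (Real.summable_one_div_nat_rpow (p := (3:ℝ))).mpr (by norm_num)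
  have h2 := (summable_nat_add_iff 1).mpr this
  apply h2.congr fun n => ?_
  unfold zz
  rw [show ((3:ℝ)) = ((3:ℕ):ℝ) from by norm_num, Real.rpow_natCast]
  push_cast
  ring

open ENNReal in
lemma fa_nonneg (j k : ℕ) : 0 ≤ fa j k := by unfold fa; positivity
lemma fb_nonneg (j k : ℕ) : 0 ≤ fb j k := by unfold fb; positivity
lemma ff_nonneg (n : ℕ) : 0 ≤ ff n := by
  unfold ff
  have := harmonic_pos (n := n+1) (by omega)
  have h2 : (0:ℝ) < (harmonic (n+1) : ℝ) := by exact_mod_cast this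
  positivity
lemma vv_nonneg (m : ℕ) : 0 ≤ vv m := by
  unfold vv
  have := harmonic_pos (n := m+1) (by omega)
  have h2 : (0:ℝ) < (harmonic (m+1) : ℝ) := by exact_mod_cast this
  positivity
lemma zz_nonneg (n : ℕ) : 0 ≤ zz n := by unfold zz; positivity

lemma E1 : ∑' p : ℕ × ℕ, ENNReal.ofReal (fa p.1 p.2) = ∑' n, ENNReal.ofReal (ff n) := by
  rw [ENNReal.tsum_prod']
  congr 1
  ext j
  rw [← ENNReal.ofReal_tsum_of_nonneg (fa_nonneg j) (hasSum_fa j).summable]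
  rw [(hasSum_fa j).tsum_eq]
  unfold ff
  norm_num

lemma E2 : ∑' p : ℕ × ℕ, ENNReal.ofReal (fa p.1 p.2)
    = 2 * ∑' p : ℕ × ℕ, ENNReal.ofReal (fb p.1 p.2) := by
  have h1 : ∀ p : ℕ × ℕ, ENNReal.ofReal (fa p.1 p.2)
      = ENNReal.ofReal (fb p.1 p.2) + ENNReal.ofReal (fb p.2 p.1) := by
    intro p
    rw [fa_eq_fb p.1 p.2, ENNReal.ofReal_add (fb_nonneg _ _) (fb_nonneg _ _)]
  simp_rw [h1]
  rw [ENNReal.tsum_add]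
  have h2 : ∑' p : ℕ × ℕ, ENNReal.ofReal (fb p.2 p.1)
      = ∑' p : ℕ × ℕ, ENNReal.ofReal (fb p.1 p.2) :=
    (Equiv.prodComm ℕ ℕ).tsum_eq (fun p => ENNReal.ofReal (fb p.1 p.2))
  rw [h2, two_mul]

lemma E3 (j : ℕ) (F : ℕ → ENNReal) :
    ∑' k, F (j+k) = ∑' m, if j ≤ m then F m else 0 := by
  have hg : Function.Injective (fun k => j + k) := fun a b h => by simpa using h
  have hsupp : Function.support (fun m => if j ≤ m then F m else 0) ⊆ Set.range (fun k => j + k) := by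
    intro m hm
    simp only [Function.mem_support, ne_eq, ite_eq_right_iff, not_forall] at hm
    obtain ⟨hjm, -⟩ := hm
    exact ⟨m - j, by simp; omega⟩
  have := Function.Injective.tsum_eq hg hsupp
  simp only [if_pos (Nat.le_add_right j _)] at this
  exact this.symm ▸ rfl

lemma harmonic_cast_sum (n : ℕ) : (harmonic n : ℝ) = ∑ i ∈ Finset.range n, (1:ℝ)/((i:ℝ)+1) := by
  unfold harmonic
  push_cast
  simp [one_div]

lemma E4 : ∑' p : ℕ × ℕ, ENNReal.ofReal (fb p.1 p.2) = ∑' m, ENNReal.ofReal (vv m) := by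
  rw [ENNReal.tsum_prod']
  have step1 : ∀ j : ℕ, ∑' k, ENNReal.ofReal (fb j k)
      = ∑' m, if j ≤ m then ENNReal.ofReal (1/(((j:ℝ)+1)*((m:ℝ)+2)^2)) else 0 := by
    intro j
    rw [← E3 j (fun m => ENNReal.ofReal (1/(((j:ℝ)+1)*((m:ℝ)+2)^2)))]
    apply tsum_congr
    intro k
    unfold fb
    congr 1
    push_cast
    ring_nf
  simp_rw [step1]
  rw [ENNReal.tsum_comm]
  congr 1
  ext m
  rw [tsum_eq_sum (s := Finset.range (m+1)) (by
    intro j hj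
    rw [if_neg]
    simp at hj
    omega)]
  have hif : ∀ j ∈ Finset.range (m+1),
      (if j ≤ m then ENNReal.ofReal (1/(((j:ℝ)+1)*((m:ℝ)+2)^2)) else 0)
      = ENNReal.ofReal (1/(((j:ℝ)+1)*((m:ℝ)+2)^2)) := by
    intro j hj
    rw [if_pos]
    simp at hj
    omega
  rw [Finset.sum_congr rfl hif]
  rw [← ENNReal.ofReal_sum_of_nonneg (fun j _ => by positivity)]
  congr 1
  have : ∀ j ∈ Finset.range (m+1),
      (1:ℝ)/(((j:ℝ)+1)*((m:ℝ)+2)^2) = (1/((j:ℝ)+1)) * (1/((m:ℝ)+2)^2) := by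
    intro j _
    rw [div_mul_div_comm]
    ring_nf
  rw [Finset.sum_congr rfl this, ← Finset.sum_mul]
  unfold vv
  rw [harmonic_cast_sum]
  push_cast
  ring

lemma E5 : ∑' n, ENNReal.ofReal (ff n)
    = ∑' m, ENNReal.ofReal (vv m) + ∑' n, ENNReal.ofReal (zz n) := by
  have hz : ∑' n, ENNReal.ofReal (zz n) = ENNReal.ofReal (zz 0) + ∑' n, ENNReal.ofReal (zz (n+1)) :=
    tsum_eq_zero_add' ENNReal.summable
  have hf2 : ∑' n, ENNReal.ofReal (ff n) = ENNReal.ofReal (ff 0) + ∑' n, ENNReal.ofReal (ff (n+1)) :=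
    tsum_eq_zero_add' ENNReal.summable
  rw [hf2, hz]
  have hff0 : ff 0 = 1 := by unfold ff; simp [harmonic_succ]
  have hzz0 : zz 0 = 1 := by unfold zz; norm_num
  have hsplit : ∀ n : ℕ, ENNReal.ofReal (ff (n+1))
      = ENNReal.ofReal (vv n) + ENNReal.ofReal (zz (n+1)) := by
    intro n
    rw [← ENNReal.ofReal_add (vv_nonneg n) (zz_nonneg (n+1))]
    congr 1
    unfold ff vv zz
    rw [harmonic_succ (n+1)]
    push_cast
    have h : ((n:ℝ)+2) ≠ 0 := by positivity
    field_simp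
    ring
  simp_rw [hsplit]
  rw [ENNReal.tsum_add, hff0, hzz0]
  simp [ENNReal.ofReal_one]
  abel

lemma real_main : ∑' n, ff n = 2 * ∑' n, zz n := by
  have hV : ∑' m, ENNReal.ofReal (vv m) = ENNReal.ofReal (∑' m, vv m) :=
    (ENNReal.ofReal_tsum_of_nonneg vv_nonneg summable_vv).symm
  have hVne : ∑' m, ENNReal.ofReal (vv m) ≠ ⊤ := by rw [hV]; exact ENNReal.ofReal_ne_top
  have hS2V : ∑' n, ENNReal.ofReal (ff n) = 2 * ∑' m, ENNReal.ofReal (vv m) := by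
    rw [← E1, E2, E4]
  have hVZ : ∑' m, ENNReal.ofReal (vv m) = ∑' n, ENNReal.ofReal (zz n) := by
    have h := E5
    rw [hS2V, two_mul] at h
    exact ((ENNReal.add_right_inj hVne).mp h.symm).symm
  have hfinal : ENNReal.ofReal (∑' n, ff n) = ENNReal.ofReal (2 * ∑' n, zz n) := by
    rw [ENNReal.ofReal_tsum_of_nonneg ff_nonneg summable_ff]
    rw [ENNReal.ofReal_mul (by norm_num)]
    rw [ENNReal.ofReal_tsum_of_nonneg zz_nonneg summable_zz]
    rw [hS2V, hVZ]
    norm_num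
  exact (ENNReal.ofReal_eq_ofReal_iff (tsum_nonneg ff_nonneg)
    (by have : 0 ≤ ∑' n, zz n := tsum_nonneg zz_nonneg; linarith)).mp hfinal


theorem stmt_4 :
    ∑' n : ℕ, (harmonic (n + 1) : ℂ) / ((n : ℂ) + 1) ^ 2 = 2 * riemannZeta 3 := by
  have hL : ∑' n : ℕ, (harmonic (n + 1) : ℂ) / ((n : ℂ) + 1) ^ 2 = ((∑' n, ff n : ℝ) : ℂ) := by
    rw [Complex.ofReal_tsum]
    apply tsum_congr; intro n
    unfold ff
    push_cast
    ring
  have hZr : ∑' n : ℕ, 1 / (n:ℝ)^3 = ∑' n, zz n := by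
    rw [Summable.tsum_eq_zero_add (Real.summable_one_div_nat_pow.mpr (by norm_num))]
    norm_num
    apply tsum_congr; intro n
    unfold zz
    push_cast
    ring
  have hZ : riemannZeta 3 = ((∑' n, zz n : ℝ) : ℂ) := by
    rw [show (3:ℂ) = ((3:ℕ):ℂ) by norm_num, zeta_nat_eq_tsum_of_gt_one (by norm_num)]
    rw [← hZr, Complex.ofReal_tsum]
    apply tsum_congr; intro n
    push_cast
    ring
  rw [hL, hZ, real_main]
  push_cast
  ring
end

section
/- ∑_{n=1}^∞ H_n² / n² = (17/4) ζ(4). -/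
open scoped BigOperators ENNReal NNReal
open Finset Filter

namespace ES

/-! ### базовые определения -/

noncomputable def t (n : ℕ) : NNReal := ((n : NNReal) + 1)⁻¹
noncomputable def h (n : ℕ) : NNReal := ∑ i ∈ range n, t i
noncomputable def h2 (n : ℕ) : NNReal := ∑ i ∈ range n, (t i) ^ 2

@[simp] lemma t_coe (n : ℕ) : ((t n : NNReal) : ℝ) = ((n : ℝ) + 1)⁻¹ := by simp [t]

lemma h_succ (n : ℕ) : h (n + 1) = h n + t n := by simp [h, Finset.sum_range_succ]
lemma h2_succ (n : ℕ) : h2 (n + 1) = h2 n + t n ^ 2 := by simp [h2, Finset.sum_range_succ]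

lemma t_le_one (n : ℕ) : t n ≤ 1 := by
  rw [t]
  rw [inv_le_one_iff₀]
  right
  exact le_add_self

lemma h_le (n : ℕ) : h n ≤ n := by
  induction n with
  | zero => simp [h]
  | succ n ih =>
    rw [h_succ]
    push_cast
    exact add_le_add ih (t_le_one n)

lemma t_mul_t (j k : ℕ) : t j * t k = t (j + k + 1) * (t j + t k) := by
  apply NNReal.coe_injective
  push_cast
  have h1 : (0:ℝ) < (j:ℝ)+1 := by positivity
  have h2 : (0:ℝ) < (k:ℝ)+1 := by positivity
  have h3 : (0:ℝ) < ((j:ℝ)+(k:ℝ))+2 := by positivity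
  push_cast
  simp only [t_coe]; push_cast
  field_simp
  ring

/-! ### telescoping sums in ℝ -/

lemma tendsto_inv_shift (c : ℝ) :
    Tendsto (fun M : ℕ => ((M : ℝ) + c)⁻¹) atTop (nhds 0) :=
  (tendsto_atTop_add_const_right _ c tendsto_natCast_atTop_atTop).inv_tendsto_atTop

lemma psum (s M : ℕ) :
    ∑ m ∈ range M, (((m : ℝ) + 1)⁻¹ * (((m : ℝ) + (s : ℝ)) + 2)⁻¹) =
      ((s : ℝ) + 1)⁻¹ *
        (∑ i ∈ range (s + 1), ((i : ℝ) + 1)⁻¹ -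
          ∑ i ∈ range (s + 1), (((M : ℝ) + (i : ℝ)) + 1)⁻¹) := by
  induction M with
  | zero => simp
  | succ M ih =>
    rw [Finset.sum_range_succ, ih]
    have key : ∑ i ∈ range (s + 1),
        ((((M : ℝ) + (i : ℝ)) + 1)⁻¹ - (((M + 1 : ℕ) : ℝ) + (i : ℝ) + 1)⁻¹)
        = (((M : ℝ)) + 1)⁻¹ - (((M : ℝ) + (s : ℝ)) + 2)⁻¹ := by
      have H := Finset.sum_range_sub' (fun i : ℕ => (((M : ℝ) + (i : ℝ)) + 1)⁻¹) (s + 1)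
      have e1 : ∑ i ∈ range (s + 1),
          ((((M : ℝ) + (i : ℝ)) + 1)⁻¹ - (((M + 1 : ℕ) : ℝ) + (i : ℝ) + 1)⁻¹)
          = ∑ i ∈ range (s + 1),
          ((((M : ℝ) + (i : ℝ)) + 1)⁻¹ - (((M : ℝ) + ((i+1 : ℕ) : ℝ)) + 1)⁻¹) := by
        apply Finset.sum_congr rfl; intro i _; push_cast; ring_nf
      rw [e1, H]; push_cast; ring_nf
    have expand : ∑ i ∈ range (s + 1), (((M + 1 : ℕ) : ℝ) + (i : ℝ) + 1)⁻¹
        = ∑ i ∈ range (s + 1), (((M : ℝ) + (i : ℝ)) + 1)⁻¹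
          - ((((M : ℝ)) + 1)⁻¹ - (((M : ℝ) + (s : ℝ)) + 2)⁻¹) := by
      rw [← key]; rw [Finset.sum_sub_distrib]; ring
    rw [expand]
    have hM : (0:ℝ) < (M:ℝ) + 1 := by positivity
    have hMs : (0:ℝ) < (M:ℝ) + (s:ℝ) + 2 := by positivity
    have hs : (0:ℝ) < (s:ℝ) + 1 := by positivity
    field_simp
    ring

lemma hasSum_tel (s : ℕ) :
    HasSum (fun m : ℕ => ((t m : ℝ)) * (t (m + s + 1) : ℝ))
      ((h (s + 1) : ℝ) * (t s : ℝ)) := by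
  have hnn : ∀ m : ℕ, 0 ≤ ((t m : ℝ)) * (t (m + s + 1) : ℝ) := by
    intro m; positivity
  rw [hasSum_iff_tendsto_nat_of_nonneg hnn]
  have heq : ∀ M : ℕ, ∑ m ∈ range M, ((t m : ℝ)) * (t (m + s + 1) : ℝ)
      = ((s : ℝ) + 1)⁻¹ *
        (∑ i ∈ range (s + 1), ((i : ℝ) + 1)⁻¹ -
          ∑ i ∈ range (s + 1), (((M : ℝ) + (i : ℝ)) + 1)⁻¹) := by
    intro M
    rw [← psum s M]
    apply Finset.sum_congr rfl
    intro m _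
    push_cast [t_coe]
    ring_nf
  simp only [heq]
  have hlim : Tendsto (fun M : ℕ =>
      ∑ i ∈ range (s + 1), (((M : ℝ) + (i : ℝ)) + 1)⁻¹) atTop (nhds 0) := by
    have : Tendsto (fun M : ℕ =>
        ∑ i ∈ range (s + 1), (((M : ℝ) + (i : ℝ)) + 1)⁻¹) atTop
        (nhds (∑ i ∈ range (s + 1), (0:ℝ))) := by
      apply tendsto_finset_sum
      intro i _
      simpa [add_assoc] using tendsto_inv_shift ((i : ℝ) + 1)
    simpa using this
  have hco : ((h (s+1) : ℝ) * (t s : ℝ))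
      = ((s : ℝ) + 1)⁻¹ * ((∑ i ∈ range (s + 1), ((i : ℝ) + 1)⁻¹) - 0) := by
    simp [h, NNReal.coe_sum, t_coe, mul_comm]
  rw [hco]
  exact (tendsto_const_nhds.sub hlim).const_mul _

lemma hasSum_tel2 (s : ℕ) :
    HasSum (fun m : ℕ => ((t (m + s) : ℝ)) * (t (m + s + 1) : ℝ)) ((t s : ℝ)) := by
  have hnn : ∀ m : ℕ, 0 ≤ ((t (m + s) : ℝ)) * (t (m + s + 1) : ℝ) := by
    intro m; positivity
  rw [hasSum_iff_tendsto_nat_of_nonneg hnn]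
  have heq : ∀ M : ℕ, ∑ m ∈ range M, ((t (m + s) : ℝ)) * (t (m + s + 1) : ℝ)
      = ((s : ℝ) + 1)⁻¹ - (((M : ℝ) + (s : ℝ)) + 1)⁻¹ := by
    intro M
    have H := Finset.sum_range_sub' (fun m : ℕ => (((m : ℝ) + (s : ℝ)) + 1)⁻¹) M
    push_cast at H
    rw [show ((s:ℝ)+1)⁻¹ - (((M:ℝ)+(s:ℝ))+1)⁻¹
        = ((0:ℝ)+(s:ℝ)+1)⁻¹ - ((M:ℝ)+(s:ℝ)+1)⁻¹ by norm_num, ← H]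
    apply Finset.sum_congr rfl
    intro m _
    have h1 : (0:ℝ) < (m:ℝ)+(s:ℝ)+1 := by positivity
    have h2 : (0:ℝ) < (m:ℝ)+(s:ℝ)+2 := by positivity
    push_cast [t_coe]
    field_simp
    ring_nf
    try exact Or.inl trivial
  simp only [heq]
  have : Tendsto (fun M : ℕ => (((M : ℝ) + (s : ℝ)) + 1)⁻¹) atTop (nhds 0) := by
    simpa [add_assoc] using tendsto_inv_shift ((s : ℝ) + 1)
  simpa using tendsto_const_nhds.sub this

/-! ### ENNReal infrastructure -/

noncomputable def T (n : ℕ) : ℝ≥0∞ := (t n : ℝ≥0∞)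
noncomputable def H (n : ℕ) : ℝ≥0∞ := (h n : ℝ≥0∞)
noncomputable def H2 (n : ℕ) : ℝ≥0∞ := (h2 n : ℝ≥0∞)

lemma tsum_coe_eq {f : ℕ → NNReal} {r : NNReal}
    (hf : HasSum (fun n => (f n : ℝ)) (r : ℝ)) :
    ∑' n, (f n : ℝ≥0∞) = (r : ℝ≥0∞) := by
  have h1 : HasSum f r := NNReal.hasSum_coe.mp hf
  rw [← ENNReal.coe_tsum h1.summable, h1.tsum_eq]

lemma peel (f : ℕ → ℝ≥0∞) : ∑' n, f n = f 0 + ∑' n, f (n + 1) :=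
  tsum_eq_zero_add' ENNReal.summable

lemma peel2 (f : ℕ → ℝ≥0∞) : ∑' n, f n = f 0 + f 1 + ∑' n, f (n + 2) := by
  rw [peel f, peel (fun n => f (n + 1)), ← add_assoc]

lemma group (F : ℕ → ℕ → ℝ≥0∞) :
    ∑' p : ℕ × ℕ, F p.1 p.2 = ∑' n, ∑ i ∈ range (n + 1), F i (n - i) := by
  rw [← Finset.HasAntidiagonal.sigmaAntidiagonalEquivProd.tsum_eq (fun p : ℕ × ℕ => F p.1 p.2)]
  rw [ENNReal.tsum_sigma']
  congr 1
  ext n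
  rw [tsum_fintype]
  have e1 : ∑ b : { x // x ∈ Finset.HasAntidiagonal.antidiagonal n },
      F (Finset.HasAntidiagonal.sigmaAntidiagonalEquivProd ⟨n, b⟩).1
        (Finset.HasAntidiagonal.sigmaAntidiagonalEquivProd ⟨n, b⟩).2
      = ∑ p ∈ Finset.HasAntidiagonal.antidiagonal n, F p.1 p.2 := by
    rw [← Finset.sum_attach (Finset.HasAntidiagonal.antidiagonal n) (fun p => F p.1 p.2)]
    rfl
  rw [e1, Finset.Nat.sum_antidiagonal_eq_sum_range_succ_mk]

/-- telescoping, ENNReal version -/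
lemma tel (s : ℕ) : ∑' m, T m * T (m + s + 1) = H (s + 1) * T s := by
  have : ∑' m, ((t m * t (m + s + 1) : NNReal) : ℝ≥0∞)
      = ((h (s + 1) * t s : NNReal) : ℝ≥0∞) := by
    apply tsum_coe_eq
    push_cast
    exact hasSum_tel s
  simpa [T, H, ENNReal.coe_mul] using this

lemma tel2 (s : ℕ) : ∑' m, T (m + s) * T (m + s + 1) = T s := by
  have : ∑' m, ((t (m + s) * t (m + s + 1) : NNReal) : ℝ≥0∞) = ((t s : NNReal) : ℝ≥0∞) := by
    apply tsum_coe_eq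
    push_cast
    exact hasSum_tel2 s
  simpa [T, ENNReal.coe_mul] using this

/-! ### finite sum identities -/

lemma antidiag_sum (n : ℕ) :
    ∑ i ∈ range (n + 1), t i * t (n - i) = 2 * h (n + 1) * t (n + 1) := by
  have step : ∀ i ∈ range (n + 1), t i * t (n - i) = t (n + 1) * (t i + t (n - i)) := by
    intro i hi
    rw [Finset.mem_range] at hi
    have hin : i ≤ n := Nat.lt_succ_iff.mp hi
    have : i + (n - i) + 1 = n + 1 := by omega
    rw [t_mul_t i (n - i), this]
  rw [Finset.sum_congr rfl step, ← Finset.mul_sum]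
  have refl : ∑ i ∈ range (n + 1), t (n - i) = h (n + 1) := by
    rw [h]
    exact Finset.sum_range_reflect (fun i => t i) (n + 1)
  rw [Finset.sum_add_distrib, refl]
  have : (∑ i ∈ range (n + 1), t i) = h (n + 1) := rfl
  rw [this]
  ring

lemma hsq (u : ℕ) :
    h (u + 2) ^ 2 = 2 * ∑ i ∈ range (u + 1), h (i + 1) * t (i + 1) + h2 (u + 2) := by
  induction u with
  | zero =>
    have e1 : h 2 = t 0 + t 1 := by
      rw [show (2:ℕ) = 1 + 1 from rfl, h_succ, show (1:ℕ) = 0 + 1 from rfl, h_succ]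
      simp [h]
    have e2 : h 1 = t 0 := by
      rw [show (1:ℕ) = 0 + 1 from rfl, h_succ]; simp [h]
    have e3 : h2 2 = t 0 ^ 2 + t 1 ^ 2 := by
      rw [show (2:ℕ) = 1 + 1 from rfl, h2_succ, show (1:ℕ) = 0 + 1 from rfl, h2_succ]
      simp [h2]
    rw [Finset.sum_range_one]
    norm_num [e1, e2, e3]
    ring
  | succ u ih =>
    rw [Finset.sum_range_succ, show u + 1 + 1 = u + 2 from rfl,
      show u + 2 + 1 = u + 3 from rfl]
    rw [show u + 3 = (u + 2) + 1 from rfl, h_succ (u+2), h2_succ (u+2)]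
    rw [mul_add, add_sq]
    rw [ih]
    ring

/-! ### ENNReal sum machinery -/

noncomputable def Ze2 : ℝ≥0∞ := ∑' n, T n ^ 2
noncomputable def Ze4 : ℝ≥0∞ := ∑' n, T n ^ 4
noncomputable def tl (s : ℕ) : ℝ≥0∞ := ∑' m, T (m + s) ^ 2

lemma T_le_one (n : ℕ) : T n ≤ 1 := by
  rw [T, ← ENNReal.coe_one, ENNReal.coe_le_coe]; exact t_le_one n

lemma T_anti (n : ℕ) : T (n + 1) ≤ T n := by
  rw [T, T, ENNReal.coe_le_coe, t, t]
  have e : (((n + 1 : ℕ) : ℝ≥0)) + 1 = ((n : ℝ≥0) + 1) + 1 := by push_cast; ring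
  rw [e]
  exact inv_anti₀ (by positivity) (self_le_add_right _ _)

lemma H_coe_sum (n : ℕ) : H n = ∑ i ∈ range n, T i := by
  rw [H, h, ENNReal.coe_finset_sum]; rfl

lemma H2_coe_sum (n : ℕ) : H2 n = ∑ i ∈ range n, T i ^ 2 := by
  rw [H2, h2, ENNReal.coe_finset_sum]
  apply Finset.sum_congr rfl
  intro i _
  push_cast
  rfl

lemma split (f : ℕ → ℝ≥0∞) (s : ℕ) :
    ∑' n, f n = ∑ i ∈ range s, f i + ∑' n, f (n + s) := by
  induction s with
  | zero => simp
  | succ s ih =>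
    have hp := peel (fun n => f (n + s))
    simp only [zero_add] at hp
    have e : (fun n => f (n + 1 + s)) = (fun n => f (n + (s + 1))) := by
      funext n; congr 1; omega
    rw [ih, hp, e, Finset.sum_range_succ, add_assoc]

lemma tl_add (s : ℕ) : H2 s + tl s = Ze2 := by
  rw [Ze2, split (fun n => T n ^ 2) s, H2_coe_sum, tl]

lemma tl_le (s : ℕ) : tl (s + 1) ≤ T s := by
  rw [← tel2 s, tl]
  apply ENNReal.tsum_le_tsum
  intro m
  have e : m + (s + 1) = m + s + 1 := by omega
  rw [e, pow_two]
  exact mul_le_mul_left (T_anti (m + s)) _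

/-- grouped double sum with 1/(jk) weights -/
lemma sum5 (G : ℕ → ℝ≥0∞) :
    ∑' p : ℕ × ℕ, T p.1 * T p.2 * G (p.1 + p.2)
      = ∑' n, 2 * H (n + 1) * T (n + 1) * G n := by
  rw [group (fun j k => T j * T k * G (j + k))]
  congr 1
  ext n
  have step : ∀ i ∈ range (n + 1), T i * T (n - i) * G (i + (n - i))
      = T i * T (n - i) * G n := by
    intro i hi
    rw [Finset.mem_range] at hi
    have : i + (n - i) = n := by omega
    rw [this]
  rw [Finset.sum_congr rfl step, ← Finset.sum_mul]
  have key : (∑ i ∈ range (n + 1), T i * T (n - i)) = 2 * H (n + 1) * T (n + 1) := by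
    calc ∑ i ∈ range (n + 1), T i * T (n - i)
        = ((∑ i ∈ range (n + 1), t i * t (n - i) : NNReal) : ℝ≥0∞) := by
          rw [ENNReal.coe_finset_sum]
          apply Finset.sum_congr rfl
          intro i _
          rw [ENNReal.coe_mul]
          rfl
      _ = ((2 * h (n + 1) * t (n + 1) : NNReal) : ℝ≥0∞) := by rw [antidiag_sum]
      _ = 2 * H (n + 1) * T (n + 1) := by
          rw [ENNReal.coe_mul, ENNReal.coe_mul, H, T]
          norm_cast
  rw [key]

/-! ### pointwise field identities -/

lemma nnB (j k : ℕ) :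
    t j * t k * t (j + k + 1) ^ 2 + t k ^ 2 * t (j + k + 1) ^ 2
      = t k ^ 2 * (t j * t (j + k + 1)) := by
  apply NNReal.coe_injective
  push_cast
  have h1 : (0:ℝ) < (j:ℝ)+1 := by positivity
  have h2 : (0:ℝ) < (k:ℝ)+1 := by positivity
  have h3 : (0:ℝ) < (j:ℝ)+(k:ℝ)+2 := by positivity
  simp only [t_coe]; push_cast
  field_simp
  ring

lemma nnC (j k m : ℕ) :
    t j * t k * t m * t (j + k + m + 2)
      = t (j + k + m + 2) ^ 2 * (t j * t k)
        + t (j + k + m + 2) ^ 2 * (t k * t m)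
        + t (j + k + m + 2) ^ 2 * (t j * t m) := by
  apply NNReal.coe_injective
  push_cast
  have h1 : (0:ℝ) < (j:ℝ)+1 := by positivity
  have h2 : (0:ℝ) < (k:ℝ)+1 := by positivity
  have h3 : (0:ℝ) < (m:ℝ)+1 := by positivity
  have h4 : (0:ℝ) < (j:ℝ)+(k:ℝ)+(m:ℝ)+3 := by positivity
  simp only [t_coe]; push_cast
  field_simp
  ring

lemma TB (j k : ℕ) :
    T j * T k * T (j + k + 1) ^ 2 + T k ^ 2 * T (j + k + 1) ^ 2
      = T k ^ 2 * (T j * T (j + k + 1)) := by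
  simp only [T, ← ENNReal.coe_pow, ← ENNReal.coe_mul, ← ENNReal.coe_add, ENNReal.coe_inj]
  exact nnB j k

lemma TC (j k m : ℕ) :
    T j * T k * T m * T (j + k + m + 2)
      = T (j + k + m + 2) ^ 2 * (T j * T k)
        + T (j + k + m + 2) ^ 2 * (T k * T m)
        + T (j + k + m + 2) ^ 2 * (T j * T m) := by
  simp only [T, ← ENNReal.coe_pow, ← ENNReal.coe_mul, ← ENNReal.coe_add, ENNReal.coe_inj]
  exact nnC j k m

lemma H_succE (n : ℕ) : H (n + 1) = H n + T n := by
  rw [H, H, T, h_succ, ENNReal.coe_add]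

lemma H2_succE (n : ℕ) : H2 (n + 1) = H2 n + T n ^ 2 := by
  rw [H2, H2, T, h2_succ, ENNReal.coe_add, ENNReal.coe_pow]

lemma hsqE (u : ℕ) :
    H (u + 2) ^ 2 = 2 * ∑ i ∈ range (u + 1), H (i + 1) * T (i + 1) + H2 (u + 2) := by
  have := congrArg (fun x : NNReal => (x : ℝ≥0∞)) (hsq u)
  simp only [ENNReal.coe_add, ENNReal.coe_mul, ENNReal.coe_pow,
    ENNReal.coe_finset_sum, ENNReal.coe_ofNat] at this
  convert this using 3
  all_goals rfl

/-! ### the main sums -/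

noncomputable def SS : ℝ≥0∞ := ∑' n, H (n+1) ^ 2 * T n ^ 2
noncomputable def XX : ℝ≥0∞ := ∑' n, H (n+1) * T n ^ 3
noncomputable def ZS : ℝ≥0∞ := ∑' n, H2 (n+1) * T n ^ 2
noncomputable def D2 : ℝ≥0∞ := ∑' k, T k ^ 2 * tl (k + 1)
noncomputable def AA : ℝ≥0∞ := ∑' p : ℕ × ℕ, T p.1 * T p.2 * T (p.1 + p.2 + 1) ^ 2
noncomputable def Wp : ℝ≥0∞ := ∑' n, H (n+1) * T (n+1) ^ 3
noncomputable def QW : ℝ≥0∞ := ∑' n, H (n+1) * H (n+2) * T (n+1) ^ 2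
noncomputable def W2 : ℝ≥0∞ := ∑' n, H (n+2) * T (n+1) ^ 3
noncomputable def QQ : ℝ≥0∞ :=
  ∑' p : (ℕ × ℕ) × ℕ, T p.1.1 * T p.1.2 * T p.2 * T (p.1.1 + p.1.2 + p.2 + 2)
noncomputable def RR : ℝ≥0∞ :=
  ∑' p : (ℕ × ℕ) × ℕ, T p.1.1 * T p.1.2 * T (p.1.1 + p.1.2 + p.2 + 2) ^ 2
noncomputable def S2 : ℝ≥0∞ := ∑' u, H (u+2) ^ 2 * T (u+2) ^ 2
noncomputable def X2 : ℝ≥0∞ := ∑' u, H (u+2) * T (u+2) ^ 3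
noncomputable def Z2p : ℝ≥0∞ := ∑' u, H2 (u+2) * T (u+2) ^ 2
noncomputable def P4 : ℝ≥0∞ := ∑' u, T (u+2) ^ 4
noncomputable def ZSp : ℝ≥0∞ := ∑' s, H2 (s+1) * T (s+1) ^ 2

/-! ### the equations -/

lemma eqA : AA = 2 * Wp := by
  rw [AA, sum5 (fun n => T (n + 1) ^ 2), Wp, ← ENNReal.tsum_mul_left]
  apply tsum_congr
  intro n
  ring

lemma eqXW : XX + T 0 ^ 4 = H 1 * T 0 ^ 3 + Wp + Ze4 := by
  have hX : XX = H 1 * T 0 ^ 3 + (Wp + ∑' n, T (n+1) ^ 4) := by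
    rw [XX, peel (fun n => H (n+1) * T n ^ 3)]
    congr 1
    rw [Wp, ← ENNReal.tsum_add]
    apply tsum_congr
    intro n
    rw [H_succE (n+1)]
    ring
  have hZ : Ze4 = T 0 ^ 4 + ∑' n, T (n+1) ^ 4 := peel (fun n => T n ^ 4)
  rw [hX, hZ]
  ring

lemma eq1 : ZS + D2 = Ze2 ^ 2 := by
  have : Ze2 ^ 2 = ∑' k, T k ^ 2 * Ze2 := by
    rw [ENNReal.tsum_mul_right, Ze2, pow_two]
  rw [this, ZS, D2, ← ENNReal.tsum_add]
  apply tsum_congr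
  intro k
  rw [← tl_add (k+1)]
  ring

lemma eqD2 : D2 = ZSp := by
  have h1 : D2 = ∑' p : ℕ × ℕ, T p.1 ^ 2 * T (p.2 + p.1 + 1) ^ 2 := by
    have hp : (∑' p : ℕ × ℕ, T p.1 ^ 2 * T (p.2 + p.1 + 1) ^ 2)
        = ∑' k, ∑' d, T k ^ 2 * T (d + k + 1) ^ 2 :=
      ENNReal.tsum_prod' (f := fun p : ℕ × ℕ => T p.1 ^ 2 * T (p.2 + p.1 + 1) ^ 2)
    rw [hp, D2]
    apply tsum_congr
    intro k
    rw [tl, ← ENNReal.tsum_mul_left]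
    apply tsum_congr
    intro d
    rfl
  rw [h1, group (fun k d => T k ^ 2 * T (d + k + 1) ^ 2), ZSp]
  apply tsum_congr
  intro n
  have step : ∀ i ∈ range (n + 1), T i ^ 2 * T ((n - i) + i + 1) ^ 2
      = T i ^ 2 * T (n + 1) ^ 2 := by
    intro i hi
    rw [Finset.mem_range] at hi
    congr 3
    omega
  rw [Finset.sum_congr rfl step, ← Finset.sum_mul, ← H2_coe_sum]

lemma eq2 : ZS + T 0 ^ 4 = H2 1 * T 0 ^ 2 + ZSp + Ze4 := by
  have hZS : ZS = H2 1 * T 0 ^ 2 + (ZSp + ∑' n, T (n+1) ^ 4) := by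
    rw [ZS, peel (fun n => H2 (n+1) * T n ^ 2)]
    congr 1
    rw [ZSp, ← ENNReal.tsum_add]
    apply tsum_congr
    intro n
    rw [H2_succE (n+1)]
    ring
  have hZ : Ze4 = T 0 ^ 4 + ∑' n, T (n+1) ^ 4 := peel (fun n => T n ^ 4)
  rw [hZS, hZ]
  ring

lemma eq3 : AA + D2 = XX := by
  have key : ∑' p : ℕ × ℕ,
      (T p.1 * T p.2 * T (p.1 + p.2 + 1) ^ 2 + T p.2 ^ 2 * T (p.1 + p.2 + 1) ^ 2)
      = ∑' p : ℕ × ℕ, T p.2 ^ 2 * (T p.1 * T (p.1 + p.2 + 1)) := by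
    apply tsum_congr
    intro p
    exact TB p.1 p.2
  rw [ENNReal.tsum_add] at key
  have hD : ∑' p : ℕ × ℕ, T p.2 ^ 2 * T (p.1 + p.2 + 1) ^ 2 = D2 := by
    have hp : (∑' p : ℕ × ℕ, T p.2 ^ 2 * T (p.1 + p.2 + 1) ^ 2)
        = ∑' j, ∑' k, T k ^ 2 * T (j + k + 1) ^ 2 :=
      ENNReal.tsum_prod' (f := fun p : ℕ × ℕ => T p.2 ^ 2 * T (p.1 + p.2 + 1) ^ 2)
    have hc : (∑' j, ∑' k, T k ^ 2 * T (j + k + 1) ^ 2)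
        = ∑' k, ∑' j, T k ^ 2 * T (j + k + 1) ^ 2 :=
      ENNReal.tsum_comm (f := fun j k => T k ^ 2 * T (j + k + 1) ^ 2)
    rw [hp, hc, D2]
    apply tsum_congr
    intro k
    rw [tl, ← ENNReal.tsum_mul_left]
    apply tsum_congr
    intro j
    rfl
  have hX : ∑' p : ℕ × ℕ, T p.2 ^ 2 * (T p.1 * T (p.1 + p.2 + 1)) = XX := by
    have hp : (∑' p : ℕ × ℕ, T p.2 ^ 2 * (T p.1 * T (p.1 + p.2 + 1)))
        = ∑' j, ∑' k, T k ^ 2 * (T j * T (j + k + 1)) :=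
      ENNReal.tsum_prod' (f := fun p : ℕ × ℕ => T p.2 ^ 2 * (T p.1 * T (p.1 + p.2 + 1)))
    have hc : (∑' j, ∑' k, T k ^ 2 * (T j * T (j + k + 1)))
        = ∑' k, ∑' j, T k ^ 2 * (T j * T (j + k + 1)) :=
      ENNReal.tsum_comm (f := fun j k => T k ^ 2 * (T j * T (j + k + 1)))
    rw [hp, hc, XX]
    apply tsum_congr
    intro k
    rw [ENNReal.tsum_mul_left, tel k]
    ring
  rw [hD, hX] at key
  exact key

/-! ### Q and R -/

lemma eqQ2 : QQ = 2 * QW := by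
  have hp : QQ = ∑' a : ℕ × ℕ, ∑' m, T a.1 * T a.2 * T m * T (a.1 + a.2 + m + 2) := by
    rw [QQ]
    exact ENNReal.tsum_prod'
      (f := fun p : (ℕ × ℕ) × ℕ => T p.1.1 * T p.1.2 * T p.2 * T (p.1.1 + p.1.2 + p.2 + 2))
  have inner : ∀ a : ℕ × ℕ, (∑' m, T a.1 * T a.2 * T m * T (a.1 + a.2 + m + 2))
      = T a.1 * T a.2 * (H (a.1 + a.2 + 2) * T (a.1 + a.2 + 1)) := by
    intro a
    have e1 : (∑' m, T a.1 * T a.2 * T m * T (a.1 + a.2 + m + 2))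
        = ∑' m, T a.1 * T a.2 * (T m * T (m + (a.1 + a.2 + 1) + 1)) := by
      apply tsum_congr; intro m
      have : a.1 + a.2 + m + 2 = m + (a.1 + a.2 + 1) + 1 := by omega
      rw [this]; ring
    rw [e1, ENNReal.tsum_mul_left, tel (a.1 + a.2 + 1)]
  have e2 : QQ = ∑' a : ℕ × ℕ, T a.1 * T a.2 * (H (a.1 + a.2 + 2) * T (a.1 + a.2 + 1)) := by
    rw [hp]; exact tsum_congr inner
  rw [e2, sum5 (fun n => H (n + 2) * T (n + 1)), QW, ← ENNReal.tsum_mul_left]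
  apply tsum_congr
  intro n
  ring

def permB : (ℕ × ℕ) × ℕ ≃ (ℕ × ℕ) × ℕ where
  toFun p := ((p.1.2, p.2), p.1.1)
  invFun p := ((p.2, p.1.1), p.1.2)
  left_inv p := rfl
  right_inv p := rfl

def permC : (ℕ × ℕ) × ℕ ≃ (ℕ × ℕ) × ℕ where
  toFun p := ((p.1.1, p.2), p.1.2)
  invFun p := ((p.1.1, p.2), p.1.2)
  left_inv p := rfl
  right_inv p := rfl

lemma eqQR : QQ = RR + RR + RR := by
  have key : QQ = (∑' p : (ℕ × ℕ) × ℕ,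
        T (p.1.1 + p.1.2 + p.2 + 2) ^ 2 * (T p.1.1 * T p.1.2))
      + (∑' p : (ℕ × ℕ) × ℕ, T (p.1.1 + p.1.2 + p.2 + 2) ^ 2 * (T p.1.2 * T p.2))
      + (∑' p : (ℕ × ℕ) × ℕ, T (p.1.1 + p.1.2 + p.2 + 2) ^ 2 * (T p.1.1 * T p.2)) := by
    rw [QQ, ← ENNReal.tsum_add, ← ENNReal.tsum_add]
    apply tsum_congr
    intro p
    exact TC p.1.1 p.1.2 p.2
  have h1 : (∑' p : (ℕ × ℕ) × ℕ, T (p.1.1 + p.1.2 + p.2 + 2) ^ 2 * (T p.1.1 * T p.1.2))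
      = RR := by
    rw [RR]; apply tsum_congr; intro p; ring
  have h2 : (∑' p : (ℕ × ℕ) × ℕ, T (p.1.1 + p.1.2 + p.2 + 2) ^ 2 * (T p.1.2 * T p.2))
      = RR := by
    rw [RR, ← permB.tsum_eq
      (fun p : (ℕ × ℕ) × ℕ => T p.1.1 * T p.1.2 * T (p.1.1 + p.1.2 + p.2 + 2) ^ 2)]
    apply tsum_congr
    intro p
    show T (p.1.1 + p.1.2 + p.2 + 2) ^ 2 * (T p.1.2 * T p.2)
      = T p.1.2 * T p.2 * T (p.1.2 + p.2 + p.1.1 + 2) ^ 2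
    have : p.1.1 + p.1.2 + p.2 + 2 = p.1.2 + p.2 + p.1.1 + 2 := by omega
    rw [this]; ring
  have h3 : (∑' p : (ℕ × ℕ) × ℕ, T (p.1.1 + p.1.2 + p.2 + 2) ^ 2 * (T p.1.1 * T p.2))
      = RR := by
    rw [RR, ← permC.tsum_eq
      (fun p : (ℕ × ℕ) × ℕ => T p.1.1 * T p.1.2 * T (p.1.1 + p.1.2 + p.2 + 2) ^ 2)]
    apply tsum_congr
    intro p
    show T (p.1.1 + p.1.2 + p.2 + 2) ^ 2 * (T p.1.1 * T p.2)
      = T p.1.1 * T p.2 * T (p.1.1 + p.2 + p.1.2 + 2) ^ 2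
    have : p.1.1 + p.1.2 + p.2 + 2 = p.1.1 + p.2 + p.1.2 + 2 := by omega
    rw [this]; ring
  rw [key, h1, h2, h3]

lemma eqRtl : RR = ∑' n, 2 * H (n + 1) * T (n + 1) * tl (n + 2) := by
  have hp : RR = ∑' a : ℕ × ℕ, ∑' m, T a.1 * T a.2 * T (a.1 + a.2 + m + 2) ^ 2 := by
    rw [RR]
    exact ENNReal.tsum_prod'
      (f := fun p : (ℕ × ℕ) × ℕ => T p.1.1 * T p.1.2 * T (p.1.1 + p.1.2 + p.2 + 2) ^ 2)
  have inner : ∀ a : ℕ × ℕ, (∑' m, T a.1 * T a.2 * T (a.1 + a.2 + m + 2) ^ 2)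
      = T a.1 * T a.2 * tl (a.1 + a.2 + 2) := by
    intro a
    rw [tl, ← ENNReal.tsum_mul_left]
    apply tsum_congr
    intro m
    have : a.1 + a.2 + m + 2 = m + (a.1 + a.2 + 2) := by omega
    rw [this]
  rw [hp, tsum_congr inner]
  exact sum5 (fun n => tl (n + 2))

lemma eqR : RR + Z2p = S2 := by
  have e2 := eqRtl
  have e3 : RR = ∑' p : ℕ × ℕ, 2 * H (p.1 + 1) * T (p.1 + 1) * T (p.2 + p.1 + 2) ^ 2 := by
    rw [e2]

    have hp2 : (∑' p : ℕ × ℕ, 2 * H (p.1 + 1) * T (p.1 + 1) * T (p.2 + p.1 + 2) ^ 2)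
        = ∑' n, ∑' m, 2 * H (n + 1) * T (n + 1) * T (m + n + 2) ^ 2 :=
      ENNReal.tsum_prod'
        (f := fun p : ℕ × ℕ => 2 * H (p.1 + 1) * T (p.1 + 1) * T (p.2 + p.1 + 2) ^ 2)
    rw [hp2]
    apply tsum_congr
    intro n
    rw [tl, ← ENNReal.tsum_mul_left]
    apply tsum_congr
    intro m
    have : m + (n + 2) = m + n + 2 := by omega
    rw [this]
  have e4 : RR = ∑' u, (2 * ∑ i ∈ range (u + 1), H (i + 1) * T (i + 1)) * T (u + 2) ^ 2 := by
    rw [e3, group (fun n m => 2 * H (n + 1) * T (n + 1) * T (m + n + 2) ^ 2)]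
    apply tsum_congr
    intro u
    have step : ∀ i ∈ range (u + 1), 2 * H (i + 1) * T (i + 1) * T ((u - i) + i + 2) ^ 2
        = 2 * (H (i + 1) * T (i + 1)) * T (u + 2) ^ 2 := by
      intro i hi
      rw [Finset.mem_range] at hi
      have : (u - i) + i + 2 = u + 2 := by omega
      rw [this]; ring
    rw [Finset.sum_congr rfl step, ← Finset.sum_mul, ← Finset.mul_sum]
  rw [e4, Z2p, S2, ← ENNReal.tsum_add]
  apply tsum_congr
  intro u
  rw [hsqE u]
  ring

/-! ### peeling equations -/

lemma eqS1 : SS = H 1 ^ 2 * T 0 ^ 2 + QW + W2 := by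
  rw [SS, peel (fun n => H (n+1) ^ 2 * T n ^ 2), QW, W2, add_assoc, ← ENNReal.tsum_add]
  congr 1
  apply tsum_congr
  intro n
  rw [H_succE (n+1)]
  ring

lemma eqX1 : XX = H 1 * T 0 ^ 3 + W2 := by
  rw [XX, peel (fun n => H (n+1) * T n ^ 3), W2]

lemma eqS2p : SS = H 1 ^ 2 * T 0 ^ 2 + H 2 ^ 2 * T 1 ^ 2 + (S2 + (2 * X2 + P4)) := by
  rw [SS, peel2 (fun n => H (n+1) ^ 2 * T n ^ 2)]
  congr 1
  rw [S2, X2, P4, ← ENNReal.tsum_mul_left, ← ENNReal.tsum_add, ← ENNReal.tsum_add]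
  apply tsum_congr
  intro n
  rw [show n + 2 + 1 = (n + 2) + 1 from rfl, H_succE (n+2)]
  ring

lemma eqZ2p : ZS = H2 1 * T 0 ^ 2 + H2 2 * T 1 ^ 2 + (Z2p + P4) := by
  rw [ZS, peel2 (fun n => H2 (n+1) * T n ^ 2)]
  congr 1
  rw [Z2p, P4, ← ENNReal.tsum_add]
  apply tsum_congr
  intro n
  rw [show n + 2 + 1 = (n + 2) + 1 from rfl, H2_succE (n+2)]
  ring

lemma eqX2p : XX = H 1 * T 0 ^ 3 + H 2 * T 1 ^ 3 + (X2 + P4) := by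
  rw [XX, peel2 (fun n => H (n+1) * T n ^ 3)]
  congr 1
  rw [X2, P4, ← ENNReal.tsum_add]
  apply tsum_congr
  intro n
  rw [show n + 2 + 1 = (n + 2) + 1 from rfl, H_succE (n+2)]
  ring

lemma eqZe4p : Ze4 = T 0 ^ 4 + T 1 ^ 4 + P4 := by
  rw [Ze4, peel2 (fun n => T n ^ 4), P4]

/-! ### values and finiteness -/

lemma coe_tsum_val {f : ℕ → NNReal} {r : ℝ} (hr : HasSum (fun n => (f n : ℝ)) r) :
    (∑' n, (f n : ℝ≥0∞)) ≠ ⊤ ∧ (∑' n, (f n : ℝ≥0∞)).toReal = r := by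
  have hs : Summable f := by
    rw [← NNReal.summable_coe]
    exact hr.summable
  constructor
  · rw [← ENNReal.coe_tsum hs]
    exact ENNReal.coe_ne_top
  · rw [← ENNReal.coe_tsum hs, ENNReal.coe_toReal, NNReal.coe_tsum]
    exact hr.tsum_eq

open Real in
lemma hasSum_Ze2 : HasSum (fun n : ℕ => ((t n : ℝ)) ^ 2) (π ^ 2 / 6) := by
  have h0 := hasSum_zeta_two
  have h1 := (hasSum_nat_add_iff' (f := fun n : ℕ => 1 / (n : ℝ) ^ 2) 1).mpr h0
  simp only [Finset.sum_range_one, Nat.cast_zero] at h1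
  norm_num at h1
  convert h1 using 2 with n
  · rfl
  rw [t_coe]
  push_cast
  rw [inv_pow]

open Real in
lemma hasSum_Ze4 : HasSum (fun n : ℕ => ((t n : ℝ)) ^ 4) (π ^ 4 / 90) := by
  have h0 := hasSum_zeta_four
  have h1 := (hasSum_nat_add_iff' (f := fun n : ℕ => 1 / (n : ℝ) ^ 4) 1).mpr h0
  simp only [Finset.sum_range_one, Nat.cast_zero] at h1
  norm_num at h1
  convert h1 using 2 with n
  · rfl
  rw [t_coe]
  push_cast
  rw [inv_pow]

open Real in
lemma Ze2_val : Ze2 ≠ ⊤ ∧ Ze2.toReal = π ^ 2 / 6 := by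
  have he : Ze2 = ∑' n, ((t n ^ 2 : NNReal) : ℝ≥0∞) := by
    rw [Ze2]; apply tsum_congr; intro n; rw [T]; push_cast; rfl
  rw [he]
  exact coe_tsum_val (by push_cast; exact hasSum_Ze2)

open Real in
lemma Ze4_val : Ze4 ≠ ⊤ ∧ Ze4.toReal = π ^ 4 / 90 := by
  have he : Ze4 = ∑' n, ((t n ^ 4 : NNReal) : ℝ≥0∞) := by
    rw [Ze4]; apply tsum_congr; intro n; rw [T]; push_cast; rfl
  rw [he]
  exact coe_tsum_val (by push_cast; exact hasSum_Ze4)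

lemma HT_le_one (n : ℕ) : H (n + 1) * T n ≤ 1 := by
  rw [H, T, ← ENNReal.coe_mul, ← ENNReal.coe_one, ENNReal.coe_le_coe]
  have h1 : h (n + 1) ≤ ((n : NNReal) + 1) := by
    have := h_le (n + 1); push_cast at this ⊢; exact this
  calc h (n + 1) * t n ≤ ((n : NNReal) + 1) * t n := mul_le_mul_left h1 _
    _ = 1 := by
        rw [t]
        exact mul_inv_cancel₀ (by positivity)

lemma XX_le : XX ≤ Ze2 := by
  rw [XX, Ze2]
  apply ENNReal.tsum_le_tsum
  intro n
  calc H (n+1) * T n ^ 3 = (H (n+1) * T n) * T n ^ 2 := by ring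
    _ ≤ 1 * T n ^ 2 := mul_le_mul_left (HT_le_one n) _
    _ = T n ^ 2 := one_mul _

noncomputable def MM : ℝ≥0∞ := ∑' n, H (n+1) * T (n+1) ^ 2

lemma MM_le : MM ≤ Ze2 := by
  have h1 : MM = ∑' p : ℕ × ℕ, T p.1 * T (p.1 + p.2 + 1) ^ 2 := by
    rw [group (fun i d => T i * T (i + d + 1) ^ 2), MM]
    apply tsum_congr
    intro n
    have step : ∀ i ∈ range (n + 1), T i * T (i + (n - i) + 1) ^ 2
        = T i * T (n + 1) ^ 2 := by
      intro i hi
      rw [Finset.mem_range] at hi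
      have : i + (n - i) + 1 = n + 1 := by omega
      rw [this]
    rw [Finset.sum_congr rfl step, ← Finset.sum_mul, ← H_coe_sum]
  have h2 : MM = ∑' i, T i * tl (i + 1) := by
    rw [h1]
    have hp : (∑' p : ℕ × ℕ, T p.1 * T (p.1 + p.2 + 1) ^ 2)
        = ∑' i, ∑' d, T i * T (i + d + 1) ^ 2 :=
      ENNReal.tsum_prod' (f := fun p : ℕ × ℕ => T p.1 * T (p.1 + p.2 + 1) ^ 2)
    rw [hp]
    apply tsum_congr
    intro i
    rw [tl, ← ENNReal.tsum_mul_left]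
    apply tsum_congr
    intro d
    have : d + (i + 1) = i + d + 1 := by omega
    rw [this]
  rw [h2, Ze2]
  apply ENNReal.tsum_le_tsum
  intro i
  calc T i * tl (i + 1) ≤ T i * T i := mul_le_mul_right (tl_le i) _
    _ = T i ^ 2 := (sq (T i)).symm

lemma RR_le : RR ≤ 2 * MM := by
  rw [eqRtl, MM, ← ENNReal.tsum_mul_left]
  apply ENNReal.tsum_le_tsum
  intro n
  calc 2 * H (n+1) * T (n+1) * tl (n + 2)
      ≤ 2 * H (n+1) * T (n+1) * T (n+1) := mul_le_mul_right (tl_le (n + 1)) _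
    _ = 2 * (H (n+1) * T (n+1) ^ 2) := by ring

/-! finiteness -/

lemma fin_Ze2 : Ze2 ≠ ⊤ := Ze2_val.1
lemma fin_Ze4 : Ze4 ≠ ⊤ := Ze4_val.1
lemma fin_MM : MM ≠ ⊤ := (lt_of_le_of_lt MM_le (lt_top_iff_ne_top.mpr fin_Ze2)).ne
lemma fin_XX : XX ≠ ⊤ := (lt_of_le_of_lt XX_le (lt_top_iff_ne_top.mpr fin_Ze2)).ne
lemma fin_RR : RR ≠ ⊤ := by
  refine (lt_of_le_of_lt RR_le ?_).ne
  exact ENNReal.mul_lt_top ENNReal.ofNat_lt_top (lt_top_iff_ne_top.mpr fin_MM)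
lemma fin_QQ : QQ ≠ ⊤ := by
  rw [eqQR]
  simp [ENNReal.add_ne_top, fin_RR]
lemma fin_QW : QW ≠ ⊤ := by
  have : QW ≤ QQ := by rw [eqQ2, two_mul]; exact le_self_add
  exact (lt_of_le_of_lt this (lt_top_iff_ne_top.mpr fin_QQ)).ne
lemma fin_W2 : W2 ≠ ⊤ := by
  have : W2 ≤ XX := by rw [eqX1]; exact le_add_self
  exact (lt_of_le_of_lt this (lt_top_iff_ne_top.mpr fin_XX)).ne
lemma fin_coe_mul (a b : NNReal) : ((a : ℝ≥0∞)) * ((b : ℝ≥0∞)) ≠ ⊤ :=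
  ENNReal.mul_ne_top ENNReal.coe_ne_top ENNReal.coe_ne_top
lemma fin_SS : SS ≠ ⊤ := by
  rw [eqS1]
  refine ENNReal.add_ne_top.mpr ⟨ENNReal.add_ne_top.mpr ⟨?_, fin_QW⟩, fin_W2⟩
  exact ENNReal.mul_ne_top (ENNReal.pow_ne_top ENNReal.coe_ne_top)
    (ENNReal.pow_ne_top ENNReal.coe_ne_top)
lemma fin_S2 : S2 ≠ ⊤ := by
  have : S2 ≤ SS := by
    rw [eqS2p]
    calc S2 ≤ S2 + (2 * X2 + P4) := le_self_add
      _ ≤ _ := le_add_self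
  exact (lt_of_le_of_lt this (lt_top_iff_ne_top.mpr fin_SS)).ne
lemma fin_P4 : P4 ≠ ⊤ := by
  have : P4 ≤ Ze4 := by rw [eqZe4p]; exact le_add_self
  exact (lt_of_le_of_lt this (lt_top_iff_ne_top.mpr fin_Ze4)).ne
lemma fin_X2 : X2 ≠ ⊤ := by
  have : X2 ≤ XX := by
    rw [eqX2p]
    calc X2 ≤ X2 + P4 := le_self_add
      _ ≤ _ := le_add_self
  exact (lt_of_le_of_lt this (lt_top_iff_ne_top.mpr fin_XX)).ne
lemma fin_Z2p : Z2p ≠ ⊤ := by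
  have : Z2p ≤ S2 := by rw [← eqR]; exact le_add_self
  exact (lt_of_le_of_lt this (lt_top_iff_ne_top.mpr fin_S2)).ne
lemma fin_Ze2sq : Ze2 ^ 2 ≠ ⊤ := ENNReal.pow_ne_top fin_Ze2
lemma fin_ZS : ZS ≠ ⊤ := by
  have : ZS ≤ Ze2 ^ 2 := by rw [← eq1]; exact le_self_add
  exact (lt_of_le_of_lt this (lt_top_iff_ne_top.mpr fin_Ze2sq)).ne
lemma fin_D2 : D2 ≠ ⊤ := by
  have : D2 ≤ Ze2 ^ 2 := by rw [← eq1]; exact le_add_self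
  exact (lt_of_le_of_lt this (lt_top_iff_ne_top.mpr fin_Ze2sq)).ne
lemma fin_AA : AA ≠ ⊤ := by
  have : AA ≤ XX := by rw [← eq3]; exact le_self_add
  exact (lt_of_le_of_lt this (lt_top_iff_ne_top.mpr fin_XX)).ne
lemma fin_Wp : Wp ≠ ⊤ := by
  have : Wp ≤ AA := by rw [eqA, two_mul]; exact le_self_add
  exact (lt_of_le_of_lt this (lt_top_iff_ne_top.mpr fin_AA)).ne
lemma fin_ZSp : ZSp ≠ ⊤ := eqD2 ▸ fin_D2

/-! ### conversion to ℝ and the final computation -/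

lemma fin_pow4 : T 0 ^ 4 ≠ ⊤ := ENNReal.pow_ne_top ENNReal.coe_ne_top
lemma fin_c1 : H2 1 * T 0 ^ 2 ≠ ⊤ :=
  ENNReal.mul_ne_top ENNReal.coe_ne_top (ENNReal.pow_ne_top ENNReal.coe_ne_top)
lemma fin_c2 : H 1 * T 0 ^ 3 ≠ ⊤ :=
  ENNReal.mul_ne_top ENNReal.coe_ne_top (ENNReal.pow_ne_top ENNReal.coe_ne_top)
lemma fin_c3 : H 1 ^ 2 * T 0 ^ 2 ≠ ⊤ :=
  ENNReal.mul_ne_top (ENNReal.pow_ne_top ENNReal.coe_ne_top)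
    (ENNReal.pow_ne_top ENNReal.coe_ne_top)
lemma fin_c4 : H 2 ^ 2 * T 1 ^ 2 ≠ ⊤ :=
  ENNReal.mul_ne_top (ENNReal.pow_ne_top ENNReal.coe_ne_top)
    (ENNReal.pow_ne_top ENNReal.coe_ne_top)
lemma fin_c5 : H2 2 * T 1 ^ 2 ≠ ⊤ :=
  ENNReal.mul_ne_top ENNReal.coe_ne_top (ENNReal.pow_ne_top ENNReal.coe_ne_top)
lemma fin_c6 : H 2 * T 1 ^ 3 ≠ ⊤ :=
  ENNReal.mul_ne_top ENNReal.coe_ne_top (ENNReal.pow_ne_top ENNReal.coe_ne_top)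
lemma fin_T1_4 : T 1 ^ 4 ≠ ⊤ := ENNReal.pow_ne_top ENNReal.coe_ne_top

lemma cT0_4 : (T 0 ^ 4).toReal = 1 := by
  rw [ENNReal.toReal_pow, T, ENNReal.coe_toReal]
  norm_num [t]
lemma cT1_4 : (T 1 ^ 4).toReal = 1 / 16 := by
  rw [ENNReal.toReal_pow, T, ENNReal.coe_toReal]
  norm_num [t]
lemma cH21T0 : (H2 1 * T 0 ^ 2).toReal = 1 := by
  rw [ENNReal.toReal_mul, ENNReal.toReal_pow, T, H2, ENNReal.coe_toReal, ENNReal.coe_toReal]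
  norm_num [h2, t, Finset.sum_range_succ]
lemma cH1T0 : (H 1 * T 0 ^ 3).toReal = 1 := by
  rw [ENNReal.toReal_mul, ENNReal.toReal_pow, T, H, ENNReal.coe_toReal, ENNReal.coe_toReal]
  norm_num [h, t, Finset.sum_range_succ]
lemma cH1sqT0 : (H 1 ^ 2 * T 0 ^ 2).toReal = 1 := by
  rw [ENNReal.toReal_mul, ENNReal.toReal_pow, ENNReal.toReal_pow, T, H,
    ENNReal.coe_toReal, ENNReal.coe_toReal]
  norm_num [h, t, Finset.sum_range_succ]
lemma cH2sqT1 : (H 2 ^ 2 * T 1 ^ 2).toReal = 9 / 16 := by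
  rw [ENNReal.toReal_mul, ENNReal.toReal_pow, ENNReal.toReal_pow, T, H,
    ENNReal.coe_toReal, ENNReal.coe_toReal]
  norm_num [h, t, Finset.sum_range_succ]
lemma cH22T1 : (H2 2 * T 1 ^ 2).toReal = 5 / 16 := by
  rw [ENNReal.toReal_mul, ENNReal.toReal_pow, T, H2, ENNReal.coe_toReal, ENNReal.coe_toReal]
  norm_num [h2, t, Finset.sum_range_succ]
lemma cH2T1 : (H 2 * T 1 ^ 3).toReal = 3 / 16 := by
  rw [ENNReal.toReal_mul, ENNReal.toReal_pow, T, H, ENNReal.coe_toReal, ENNReal.coe_toReal]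
  norm_num [h, t, Finset.sum_range_succ]

open Real in
lemma SS_toReal : SS.toReal = 17 / 4 * (π ^ 4 / 90) := by
  -- real images of all quantities
  set ss := SS.toReal; set xx := XX.toReal; set zs := ZS.toReal
  set d2 := D2.toReal; set aa := AA.toReal; set wp := Wp.toReal
  set qq := QQ.toReal; set qw := QW.toReal; set w2 := W2.toReal
  set rr := RR.toReal; set s2 := S2.toReal; set x2 := X2.toReal
  set z2p := Z2p.toReal; set p4 := P4.toReal; set zsp := ZSp.toReal
  set z2 := Ze2.toReal; set z4 := Ze4.toReal
  have R1 : zs + d2 = z2 ^ 2 := by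
    have := congrArg ENNReal.toReal eq1
    rwa [ENNReal.toReal_add fin_ZS fin_D2, ENNReal.toReal_pow] at this
  have R2 : zs + 1 = 1 + zsp + z4 := by
    have := congrArg ENNReal.toReal eq2
    rwa [ENNReal.toReal_add fin_ZS fin_pow4, cT0_4,
      ENNReal.toReal_add (ENNReal.add_ne_top.mpr ⟨fin_c1, fin_ZSp⟩) fin_Ze4,
      ENNReal.toReal_add fin_c1 fin_ZSp, cH21T0] at this
  have R3 : aa + d2 = xx := by
    have := congrArg ENNReal.toReal eq3
    rwa [ENNReal.toReal_add fin_AA fin_D2] at this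
  have R4 : aa = 2 * wp := by
    have := congrArg ENNReal.toReal eqA
    rwa [ENNReal.toReal_mul, ENNReal.toReal_ofNat] at this
  have R5 : xx + 1 = 1 + wp + z4 := by
    have := congrArg ENNReal.toReal eqXW
    rwa [ENNReal.toReal_add fin_XX fin_pow4, cT0_4,
      ENNReal.toReal_add (ENNReal.add_ne_top.mpr ⟨fin_c2, fin_Wp⟩) fin_Ze4,
      ENNReal.toReal_add fin_c2 fin_Wp, cH1T0] at this
  have R6 : qq = 2 * qw := by
    have := congrArg ENNReal.toReal eqQ2
    rwa [ENNReal.toReal_mul, ENNReal.toReal_ofNat] at this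
  have R7 : qq = rr + rr + rr := by
    have := congrArg ENNReal.toReal eqQR
    rwa [ENNReal.toReal_add (ENNReal.add_ne_top.mpr ⟨fin_RR, fin_RR⟩) fin_RR,
      ENNReal.toReal_add fin_RR fin_RR] at this
  have R8 : rr + z2p = s2 := by
    have := congrArg ENNReal.toReal eqR
    rwa [ENNReal.toReal_add fin_RR fin_Z2p] at this
  have R9 : ss = 1 + qw + w2 := by
    have := congrArg ENNReal.toReal eqS1
    rwa [ENNReal.toReal_add (ENNReal.add_ne_top.mpr ⟨fin_c3, fin_QW⟩) fin_W2,
      ENNReal.toReal_add fin_c3 fin_QW, cH1sqT0] at this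
  have R10 : xx = 1 + w2 := by
    have := congrArg ENNReal.toReal eqX1
    rwa [ENNReal.toReal_add fin_c2 fin_W2, cH1T0] at this
  have fin_2X2 : 2 * X2 ≠ ⊤ := ENNReal.mul_ne_top (by simp) fin_X2
  have R11 : ss = 1 + 9 / 16 + (s2 + (2 * x2 + p4)) := by
    have := congrArg ENNReal.toReal eqS2p
    rwa [ENNReal.toReal_add
        (ENNReal.add_ne_top.mpr ⟨fin_c3, fin_c4⟩)
        (ENNReal.add_ne_top.mpr ⟨fin_S2, ENNReal.add_ne_top.mpr ⟨fin_2X2, fin_P4⟩⟩),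
      ENNReal.toReal_add fin_c3 fin_c4,
      ENNReal.toReal_add fin_S2 (ENNReal.add_ne_top.mpr ⟨fin_2X2, fin_P4⟩),
      ENNReal.toReal_add fin_2X2 fin_P4, cH1sqT0, cH2sqT1,
      ENNReal.toReal_mul, ENNReal.toReal_ofNat] at this
  have R12 : zs = 1 + 5 / 16 + (z2p + p4) := by
    have := congrArg ENNReal.toReal eqZ2p
    rwa [ENNReal.toReal_add
        (ENNReal.add_ne_top.mpr ⟨fin_c1, fin_c5⟩)
        (ENNReal.add_ne_top.mpr ⟨fin_Z2p, fin_P4⟩),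
      ENNReal.toReal_add fin_c1 fin_c5,
      ENNReal.toReal_add fin_Z2p fin_P4, cH21T0, cH22T1] at this
  have R13 : xx = 1 + 3 / 16 + (x2 + p4) := by
    have := congrArg ENNReal.toReal eqX2p
    rwa [ENNReal.toReal_add
        (ENNReal.add_ne_top.mpr ⟨fin_c2, fin_c6⟩)
        (ENNReal.add_ne_top.mpr ⟨fin_X2, fin_P4⟩),
      ENNReal.toReal_add fin_c2 fin_c6,
      ENNReal.toReal_add fin_X2 fin_P4, cH1T0, cH2T1] at this
  have R14 : z4 = 1 + 1 / 16 + p4 := by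
    have := congrArg ENNReal.toReal eqZe4p
    rwa [ENNReal.toReal_add (ENNReal.add_ne_top.mpr ⟨fin_pow4, fin_T1_4⟩) fin_P4,
      ENNReal.toReal_add fin_pow4 fin_T1_4, cT0_4, cT1_4] at this
  have R15 : d2 = zsp := congrArg ENNReal.toReal eqD2
  have hz2 : z2 = π ^ 2 / 6 := Ze2_val.2
  have hz4 : z4 = π ^ 4 / 90 := Ze4_val.2
  have hz2sq : z2 ^ 2 = π ^ 4 / 36 := by rw [hz2]; ring
  rw [hz2sq] at R1
  rw [hz4] at R2 R5 R14
  linarith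

lemma harmonic_real (n : ℕ) : ((harmonic n : ℚ) : ℝ) = ((h n : NNReal) : ℝ) := by
  rw [harmonic, h]
  push_cast [NNReal.coe_sum]
  apply Finset.sum_congr rfl
  intro i _
  rw [t_coe]

lemma fin_SS_term (n : ℕ) : H (n+1) ^ 2 * T n ^ 2 ≠ ⊤ :=
  ENNReal.mul_ne_top (ENNReal.pow_ne_top ENNReal.coe_ne_top)
    (ENNReal.pow_ne_top ENNReal.coe_ne_top)

open Real in
lemma real_sum : (∑' n : ℕ, ((harmonic (n+1) : ℚ) : ℝ) ^ 2 / ((n : ℝ) + 1) ^ 2)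
    = 17 / 4 * (π ^ 4 / 90) := by
  rw [← SS_toReal, SS, ENNReal.tsum_toReal_eq fin_SS_term]
  apply tsum_congr
  intro n
  rw [ENNReal.toReal_mul, ENNReal.toReal_pow, ENNReal.toReal_pow, H, T,
    ENNReal.coe_toReal, ENNReal.coe_toReal, t_coe, harmonic_real]
  rw [div_eq_mul_inv, ← inv_pow]

end ES

theorem stmt_11 :
    ∑' n : ℕ, (harmonic (n + 1) : ℂ) ^ 2 / ((n : ℂ) + 1) ^ 2 =
      (17 / 4) * riemannZeta 4 := by
  have hterm : ∀ n : ℕ, (harmonic (n + 1) : ℂ) ^ 2 / ((n : ℂ) + 1) ^ 2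
      = (((((harmonic (n + 1) : ℚ) : ℝ) ^ 2 / ((n : ℝ) + 1) ^ 2 : ℝ)) : ℂ) := by
    intro n
    push_cast
    ring
  rw [tsum_congr hterm, ← Complex.ofReal_tsum, ES.real_sum, riemannZeta_four]
  push_cast
  ring
end

section
/- ∑_{n=1}^∞ (H_n² + H_n^{(2)}) / (n (n+1)) = 4 ζ(3). -/
open scoped BigOperators
open Finset Filter Topology

/-- Generalized harmonic number `H_n^{(2)} = ∑_{j=1}^n 1/j²`. -/
noncomputable def H2 (n : ℕ) : ℂ := ∑ j ∈ Finset.Icc 1 n, 1 / (j : ℂ) ^ 2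

namespace Stmt17aux

noncomputable def h (n : ℕ) : ℝ := (harmonic n : ℝ)
noncomputable def p (n : ℕ) : ℝ := ∑ j ∈ Finset.Icc 1 n, 1 / (j : ℝ) ^ 2

lemma h_zero : h 0 = 0 := by simp [h, harmonic]

lemma h_succ (n : ℕ) : h (n + 1) = h n + 1 / ((n : ℝ) + 1) := by
  rw [h, h, harmonic_succ]
  push_cast
  ring

lemma h_eq (n : ℕ) : h n = ∑ i ∈ Finset.range n, 1 / ((i : ℝ) + 1) := by
  rw [h, harmonic]
  push_cast
  simp [one_div]

lemma h_nonneg (n : ℕ) : 0 ≤ h n := by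
  rw [h_eq]; positivity

lemma h_mono {m n : ℕ} (hmn : m ≤ n) : h m ≤ h n := by
  rw [h_eq, h_eq]
  exact Finset.sum_le_sum_of_subset_of_nonneg (Finset.range_subset_range.2 hmn)
    (fun i _ _ => by positivity)

lemma p_zero : p 0 = 0 := by simp [p]

lemma p_succ (n : ℕ) : p (n + 1) = p n + 1 / ((n : ℝ) + 1) ^ 2 := by
  rw [p, p, Finset.sum_Icc_succ_top (Nat.le_add_left 1 n)]
  push_cast
  ring

lemma p_nonneg (n : ℕ) : 0 ≤ p n := by
  rw [p]; positivity

lemma p_le_two (n : ℕ) : p n ≤ 2 := by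
  have key : ∀ m : ℕ, p (m + 1) ≤ 2 - 1 / ((m : ℝ) + 1) := by
    intro m
    induction m with
    | zero => norm_num [p_succ, p_zero]
    | succ k ih =>
      rw [p_succ]
      have hk : (0:ℝ) < (k : ℝ) + 1 := by positivity
      have hk2 : (0:ℝ) < (k : ℝ) + 2 := by positivity
      have h2 : 1 / ((k:ℝ) + 2) ^ 2 ≤ 1 / ((k:ℝ)+1) - 1 / ((k:ℝ)+2) := by
        rw [div_sub_div _ _ (ne_of_gt hk) (ne_of_gt hk2), div_le_div_iff₀ (by positivity) (by positivity)]
        nlinarith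
      have e : ((k+1 : ℕ):ℝ) = (k:ℝ) + 1 := by push_cast; ring
      rw [e]
      have e2 : (k:ℝ) + 1 + 1 = (k:ℝ) + 2 := by ring
      rw [e2]
      linarith
  cases n with
  | zero => simp [p_zero]
  | succ m =>
    have := key m
    have hpos : (0:ℝ) ≤ 1 / ((m:ℝ)+1) := by positivity
    linarith

lemma h_le_sqrt (n : ℕ) : h n ≤ 2 * Real.sqrt n := by
  induction n with
  | zero => simp [h_zero]
  | succ k ih =>
    rw [h_succ]
    set s := Real.sqrt k with hs
    set t := Real.sqrt ((k:ℝ)+1) with ht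
    have hknn : (0:ℝ) ≤ (k:ℝ) := Nat.cast_nonneg k
    have hs2 : s ^ 2 = (k:ℝ) := Real.sq_sqrt hknn
    have ht2 : t ^ 2 = (k:ℝ) + 1 := Real.sq_sqrt (by linarith)
    have hsnn : 0 ≤ s := Real.sqrt_nonneg _
    have htnn : 0 ≤ t := Real.sqrt_nonneg _
    have hst : s ≤ t := Real.sqrt_le_sqrt (by linarith)
    have ht1 : 1 ≤ t := by nlinarith
    have key : 1 / ((k:ℝ)+1) ≤ 2 * (t - s) := by
      rw [div_le_iff₀ (by positivity)]
      nlinarith [mul_nonneg (sub_nonneg.2 hst) (sub_nonneg.2 ht1), mul_nonneg (mul_nonneg (sub_nonneg.2 hst) (sub_nonneg.2 ht1)) htnn, mul_nonneg (sub_nonneg.2 hst) hsnn]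
    have ecast : Real.sqrt ((k+1 : ℕ):ℝ) = t := by push_cast; rfl
    calc h k + 1 / ((k:ℝ)+1) ≤ 2 * s + 2 * (t - s) := by linarith
    _ = 2 * t := by ring
    _ = 2 * Real.sqrt ((k+1:ℕ):ℝ) := by rw [ecast]

lemma s32 : Summable (fun n : ℕ => ((n:ℝ)+1) ^ (-(3/2) : ℝ)) := by
  have : Summable (fun n : ℕ => ((n:ℝ)) ^ (-(3/2) : ℝ)) :=
    Real.summable_nat_rpow.mpr (by norm_num)
  have := (summable_nat_add_iff 1).mpr this
  exact this.congr (fun n => by push_cast; ring_nf)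

lemma sA : Summable (fun n : ℕ => h (n+1) / ((n:ℝ)+1) ^ 2) := by
  refine Summable.of_nonneg_of_le (fun n => div_nonneg (h_nonneg _) (by positivity)) (fun n => ?_) (s32.mul_left 2)
  have hx : (0:ℝ) < (n:ℝ) + 1 := by positivity
  have hb := h_le_sqrt (n+1)
  have ecast : ((n+1:ℕ):ℝ) = (n:ℝ)+1 := by push_cast; ring
  rw [ecast] at hb
  have : ((n:ℝ)+1) ^ (-(3/2) : ℝ) = Real.sqrt ((n:ℝ)+1) / ((n:ℝ)+1)^2 := by
    rw [Real.sqrt_eq_rpow, eq_div_iff (by positivity), ← Real.rpow_natCast ((n:ℝ)+1) 2,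
      ← Real.rpow_add hx]
    norm_num
  rw [this]
  rw [div_le_iff₀ (by positivity)]
  have e2 : 2 * (Real.sqrt ((n:ℝ)+1) / ((n:ℝ)+1)^2) * ((n:ℝ)+1)^2 = 2 * Real.sqrt ((n:ℝ)+1) := by
    field_simp
  rw [e2]
  exact hb

lemma inner_partial (j M : ℕ) :
    ∑ m ∈ Finset.range M, 1 / (((j:ℝ)+1) * ((m:ℝ)+1) * ((j:ℝ)+(m:ℝ)+2))
      = (h (j+1) + h M - h (M+j+1)) / ((j:ℝ)+1) ^ 2 := by
  induction M with
  | zero => simp [h_zero]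
  | succ M ih =>
    rw [Finset.sum_range_succ, ih]
    have e1 : h (M+1) = h M + 1/((M:ℝ)+1) := h_succ M
    have e2 : h (M+1+j+1) = h (M+j+1) + 1/((M:ℝ)+(j:ℝ)+2) := by
      have : M+1+j+1 = (M+j+1) + 1 := by omega
      rw [this, h_succ]
      push_cast
      ring_nf
    rw [e1, e2]
    push_cast
    have hj : ((j:ℝ)+1) ≠ 0 := by positivity
    have hM : ((M:ℝ)+1) ≠ 0 := by positivity
    have hMj : ((j:ℝ)+(M:ℝ)+2) ≠ 0 := by positivity
    have hMj' : ((M:ℝ)+(j:ℝ)+2) ≠ 0 := by positivity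
    field_simp
    ring

lemma h_sub_le (M k : ℕ) : h (M + k) - h M ≤ (k:ℝ) / ((M:ℝ)+1) := by
  induction k with
  | zero => simp
  | succ k ih =>
    have : M + (k+1) = (M+k)+1 := by omega
    rw [this, h_succ]
    have : 1 / ((M:ℝ)+(k:ℝ)+1) ≤ 1 / ((M:ℝ)+1) := by
      apply one_div_le_one_div_of_le (by positivity)
      have : (0:ℝ) ≤ (k:ℝ) := Nat.cast_nonneg k
      linarith
    have esplit : ((k:ℝ)+1)/((M:ℝ)+1) = (k:ℝ)/((M:ℝ)+1) + 1/((M:ℝ)+1) := by ring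
    push_cast
    rw [esplit]
    linarith

lemma inner_hasSum (j : ℕ) :
    HasSum (fun m : ℕ => 1 / (((j:ℝ)+1) * ((m:ℝ)+1) * ((j:ℝ)+(m:ℝ)+2)))
      (h (j+1) / ((j:ℝ)+1) ^ 2) := by
  rw [hasSum_iff_tendsto_nat_of_nonneg (fun m => by positivity)]
  simp only [inner_partial]
  have key : Tendsto (fun M : ℕ => h (M+j+1) - h M) atTop (𝓝 0) := by
    have hb1 : ∀ M : ℕ, 0 ≤ h (M+j+1) - h M := by
      intro M
      have : M ≤ M + j + 1 := by omega
      linarith [h_mono this]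
    have hb2 : ∀ M : ℕ, h (M+j+1) - h M ≤ ((j:ℝ)+1) / ((M:ℝ)+1) := by
      intro M
      have hsub := h_sub_le M (j+1)
      have e : M + (j+1) = M + j + 1 := by omega
      rw [e] at hsub
      push_cast at hsub
      exact hsub
    have hg : Tendsto (fun M : ℕ => ((j:ℝ)+1) / ((M:ℝ)+1)) atTop (𝓝 0) := by
      have ht : Tendsto (fun M : ℕ => ((M:ℝ)+1)) atTop atTop :=
        tendsto_atTop_add_const_right _ _ tendsto_natCast_atTop_atTop
      exact Tendsto.div_atTop tendsto_const_nhds ht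
    exact squeeze_zero hb1 hb2 hg
  have : Tendsto (fun M : ℕ => (h (j+1) + h M - h (M+j+1)) / ((j:ℝ)+1) ^ 2) atTop
      (𝓝 ((h (j+1) + 0 * (-1)) / ((j:ℝ)+1) ^ 2)) := by
    apply Tendsto.div_const
    have : Tendsto (fun M : ℕ => h M - h (M+j+1)) atTop (𝓝 (0 * (-1))) := by
      have := key.const_mul (-1 : ℝ)
      simpa [mul_comm, neg_sub, mul_neg] using this.congr (fun M => by ring)
    simpa using (tendsto_const_nhds (x := h (j+1))).add this |>.congr (fun M => by ring)
  simpa using this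

noncomputable def u (q : ℕ × ℕ) : ℝ :=
  1 / (((q.1:ℝ)+1) * ((q.2:ℝ)+1) * ((q.1:ℝ)+(q.2:ℝ)+2))

lemma u_nonneg (q : ℕ × ℕ) : 0 ≤ u q := by
  unfold u; positivity

lemma u_inner (j : ℕ) : HasSum (fun m => u (j, m)) (h (j+1) / ((j:ℝ)+1) ^ 2) :=
  inner_hasSum j

lemma su : Summable u := by
  rw [summable_prod_of_nonneg u_nonneg]
  refine ⟨fun j => (u_inner j).summable, ?_⟩
  have : (fun j : ℕ => ∑' m, u (j, m)) = fun j : ℕ => h (j+1) / ((j:ℝ)+1) ^ 2 :=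
    funext fun j => (u_inner j).tsum_eq
  rw [this]
  exact sA

lemma hU1 : ∑' q, u q = ∑' n : ℕ, h (n+1) / ((n:ℝ)+1) ^ 2 := by
  rw [Summable.tsum_prod' su (fun j => (u_inner j).summable)]
  exact tsum_congr fun j => (u_inner j).tsum_eq

lemma diag_sum (n : ℕ) :
    ∑ kl ∈ Finset.HasAntidiagonal.antidiagonal n, u kl = 2 * h (n+1) / ((n:ℝ)+2) ^ 2 := by
  rw [Finset.Nat.sum_antidiagonal_eq_sum_range_succ_mk]
  have step : ∀ k ∈ Finset.range (n+1),
      u (k, n - k) = (1/((n:ℝ)+2)^2) * (1/((k:ℝ)+1) + 1/(((n-k : ℕ):ℝ)+1)) := by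
    intro k hk
    have hkn : k ≤ n := Nat.lt_succ_iff.mp (Finset.mem_range.mp hk)
    have ec : ((n - k : ℕ):ℝ) = (n:ℝ) - (k:ℝ) := by
      rw [Nat.cast_sub hkn]
    unfold u
    simp only [ec]
    have h1 : (0:ℝ) < (k:ℝ) + 1 := by positivity
    have h2 : (0:ℝ) < (n:ℝ) - (k:ℝ) + 1 := by
      have : (k:ℝ) ≤ (n:ℝ) := by exact_mod_cast hkn
      linarith
    have h3 : (0:ℝ) < (n:ℝ) + 2 := by positivity
    field_simp
    ring_nf
    field_simp
    ring
  rw [Finset.sum_congr rfl step, ← Finset.mul_sum, Finset.sum_add_distrib]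
  have refl : ∑ k ∈ Finset.range (n+1), 1/(((n-k : ℕ):ℝ)+1)
      = ∑ k ∈ Finset.range (n+1), 1/((k:ℝ)+1) := by
    have := Finset.sum_range_reflect (fun k => 1/((k:ℝ)+1)) (n+1)
    rw [← this]
    apply Finset.sum_congr rfl
    intro k hk
    have hkn : k ≤ n := Nat.lt_succ_iff.mp (Finset.mem_range.mp hk)
    congr 2 <;> omega
  rw [refl, ← h_eq (n+1)]
  ring

lemma hU2 : ∑' q, u q = ∑' n : ℕ, 2 * h (n+1) / ((n:ℝ)+2) ^ 2 := by
  have e := Finset.HasAntidiagonal.sigmaAntidiagonalEquivProd.tsum_eq (α := ℝ) u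
  rw [← e]
  have hs : Summable (fun x : Σ n : ℕ, Finset.HasAntidiagonal.antidiagonal n =>
      u (Finset.HasAntidiagonal.sigmaAntidiagonalEquivProd x)) :=
    Finset.HasAntidiagonal.sigmaAntidiagonalEquivProd.summable_iff.mpr su
  rw [Summable.tsum_sigma' (fun n => (hasSum_fintype _).summable) hs]
  refine tsum_congr fun n => ?_
  have : ∑' (k : (Finset.HasAntidiagonal.antidiagonal n : Finset (ℕ × ℕ))),
      u (Finset.HasAntidiagonal.sigmaAntidiagonalEquivProd ⟨n, k⟩) = ∑ kl ∈ Finset.HasAntidiagonal.antidiagonal n, u kl := by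
    rw [tsum_fintype]
    exact Finset.sum_coe_sort (Finset.HasAntidiagonal.antidiagonal n) u
  rw [this, diag_sum]

lemma s3 : Summable (fun n : ℕ => 1 / ((n:ℝ)+1) ^ 3) := by
  have : Summable (fun n : ℕ => 1 / (n:ℝ) ^ 3) :=
    Real.summable_one_div_nat_pow.mpr (by norm_num)
  have := (summable_nat_add_iff 1).mpr this
  exact this.congr (fun n => by push_cast; ring_nf)

noncomputable def z3 : ℝ := ∑' n : ℕ, 1 / ((n:ℝ)+1) ^ 3

lemma sA' : Summable (fun n : ℕ => h n / ((n:ℝ)+1) ^ 2) := by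
  refine Summable.of_nonneg_of_le (fun n => div_nonneg (h_nonneg _) (by positivity))
    (fun n => ?_) sA
  gcongr
  exact h_mono (Nat.le_succ n)

lemma euler : ∑' n : ℕ, h (n+1) / ((n:ℝ)+1) ^ 2 = 2 * z3 := by
  set A := ∑' n : ℕ, h (n+1) / ((n:ℝ)+1) ^ 2 with hA
  set B := ∑' n : ℕ, h (n+1) / ((n:ℝ)+2) ^ 2 with hB
  have h1 : A = 2 * B := by
    rw [hA, ← hU1, hU2, hB]
    rw [← tsum_mul_left]
    exact tsum_congr fun n => by ring
  have h2 : A = B + z3 := by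
    have hcongr : (fun n : ℕ => h (n+1) / ((n:ℝ)+1) ^ 2)
        = fun n : ℕ => h n / ((n:ℝ)+1) ^ 2 + 1 / ((n:ℝ)+1) ^ 3 := by
      funext n
      rw [h_succ]
      field_simp
    rw [hA, hcongr, Summable.tsum_add sA' s3]
    congr 1
    rw [Summable.tsum_eq_zero_add sA']
    simp only [h_zero, zero_div, zero_add]
    rw [hB]
    exact tsum_congr fun n => by push_cast; ring_nf
  linarith

noncomputable def aR (n : ℕ) : ℝ := h n ^ 2 + p n

lemma aR_nonneg (n : ℕ) : 0 ≤ aR n := by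
  have := p_nonneg n
  have := sq_nonneg (h n)
  unfold aR; linarith

noncomputable def term (n : ℕ) : ℝ := aR (n+1) / (((n:ℝ)+1) * ((n:ℝ)+2))

lemma term_nonneg (n : ℕ) : 0 ≤ term n := by
  unfold term
  exact div_nonneg (aR_nonneg _) (by positivity)

lemma main_partial (N : ℕ) :
    ∑ k ∈ Finset.range N, term k
      = (∑ k ∈ Finset.range N, 2 * h (k+1) / ((k:ℝ)+1) ^ 2) - aR N / ((N:ℝ)+1) := by
  induction N with
  | zero => simp [aR, h_zero, p_zero]
  | succ N ih =>
    rw [Finset.sum_range_succ, Finset.sum_range_succ, ih]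
    have key : term N = 2 * h (N+1) / ((N:ℝ)+1) ^ 2
        - aR (N+1) / (((N+1:ℕ):ℝ)+1) + aR N / ((N:ℝ)+1) := by
      unfold term aR
      rw [h_succ, p_succ]
      push_cast
      have h1 : ((N:ℝ)+1) ≠ 0 := by positivity
      have h2 : ((N:ℝ)+2) ≠ 0 := by positivity
      field_simp
      ring
    rw [key]
    ring

lemma err_tendsto : Tendsto (fun N : ℕ => aR N / ((N:ℝ)+1)) atTop (𝓝 0) := by
  have hb : ∀ N : ℕ, aR N / ((N:ℝ)+1) ≤ ((1 + Real.log N) ^ 2 + 2) / ((N:ℝ)+1) := by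
    intro N
    have hh : h N ≤ 1 + Real.log N := by
      have := harmonic_le_one_add_log N
      rw [h]
      exact_mod_cast this
    have hlog : 0 ≤ 1 + Real.log N := by
      rcases Nat.eq_zero_or_pos N with h0 | h0
      · simp [h0]
      · have : (1:ℝ) ≤ (N:ℝ) := by exact_mod_cast h0
        have := Real.log_nonneg this
        linarith
    have hsq : h N ^ 2 ≤ (1 + Real.log N) ^ 2 := by
      have := h_nonneg N
      nlinarith
    have hp := p_le_two N
    have hnum : aR N ≤ (1 + Real.log N) ^ 2 + 2 := by
      unfold aR; linarith
    gcongr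
  apply squeeze_zero (fun N => div_nonneg (aR_nonneg N) (by positivity)) hb
  have hF : Tendsto (fun x : ℝ => ((1 + Real.log x) ^ 2 + 2) / (x+1)) atTop (𝓝 0) := by
    have e : (fun x : ℝ => ((1 + Real.log x) ^ 2 + 2) / (x+1))
        = fun x : ℝ => 3 * (Real.log x ^ 0 / (1*x+1)) + (2 * (Real.log x ^ 1 / (1*x+1))
          + Real.log x ^ 2 / (1*x+1)) := by
      funext x
      ring
    rw [e]
    have t0 := Real.tendsto_pow_log_div_mul_add_atTop 1 1 0 one_ne_zero
    have t1 := Real.tendsto_pow_log_div_mul_add_atTop 1 1 1 one_ne_zero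
    have t2 := Real.tendsto_pow_log_div_mul_add_atTop 1 1 2 one_ne_zero
    have := ((t0.const_mul 3).add ((t1.const_mul 2).add t2))
    simpa using this
  exact hF.comp tendsto_natCast_atTop_atTop

lemma main_hasSum : HasSum term (4 * z3) := by
  rw [hasSum_iff_tendsto_nat_of_nonneg term_nonneg]
  have hP : Tendsto (fun N : ℕ => ∑ k ∈ Finset.range N, 2 * h (k+1) / ((k:ℝ)+1) ^ 2)
      atTop (𝓝 (4 * z3)) := by
    have hsum : Summable (fun k : ℕ => 2 * h (k+1) / ((k:ℝ)+1) ^ 2) := by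
      have := sA.mul_left 2
      exact this.congr (fun k => by ring)
    have htsum : ∑' k : ℕ, 2 * h (k+1) / ((k:ℝ)+1) ^ 2 = 4 * z3 := by
      have : ∑' k : ℕ, 2 * h (k+1) / ((k:ℝ)+1) ^ 2
          = 2 * ∑' k : ℕ, h (k+1) / ((k:ℝ)+1) ^ 2 := by
        rw [← tsum_mul_left]
        exact tsum_congr fun k => by ring
      rw [this, euler]
      ring
    rw [← htsum]
    exact hsum.hasSum.tendsto_sum_nat
  have := hP.sub err_tendsto
  rw [sub_zero] at this
  exact this.congr (fun N => (main_partial N).symm)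

lemma z3_complex : riemannZeta 3 = ((z3 : ℝ) : ℂ) := by
  have hgt : (1:ℕ) < 3 := by norm_num
  have h3 := zeta_nat_eq_tsum_of_gt_one hgt
  have e3 : ((3:ℕ):ℂ) = (3:ℂ) := by norm_num
  rw [e3] at h3
  rw [h3]
  have hf : Summable (fun n : ℕ => 1 / (n:ℝ) ^ 3) :=
    Real.summable_one_div_nat_pow.mpr (by norm_num)
  have hreal : HasSum (fun n : ℕ => 1 / (n:ℝ) ^ 3) z3 := by
    have := hf.hasSum
    have ht : ∑' n : ℕ, 1 / (n:ℝ) ^ 3 = z3 := by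
      rw [Summable.tsum_eq_zero_add hf]
      norm_num
      rw [z3]
      exact tsum_congr fun n => by push_cast; ring_nf
    rwa [ht] at this
  have hC : HasSum (fun n : ℕ => ((1 / (n:ℝ) ^ 3 : ℝ) : ℂ)) ((z3 : ℝ) : ℂ) :=
    Complex.ofRealCLM.hasSum hreal
  have : HasSum (fun n : ℕ => 1 / (n:ℂ) ^ 3) ((z3 : ℝ) : ℂ) := by
    refine hC.congr_fun fun n => ?_
    push_cast
    ring
  exact this.tsum_eq

end Stmt17aux

lemma H2_eq (n : ℕ) : H2 n = ((Stmt17aux.p n : ℝ) : ℂ) := by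
  rw [H2, Stmt17aux.p, Complex.ofReal_sum]
  exact Finset.sum_congr rfl fun j _ => by push_cast; ring

theorem stmt_17 :
    ∑' n : ℕ, ((harmonic (n + 1) : ℂ) ^ 2 + H2 (n + 1)) /
        (((n : ℂ) + 1) * ((n : ℂ) + 2)) =
      4 * riemannZeta 3 := by
  have hC : HasSum (fun n : ℕ => ((Stmt17aux.term n : ℝ) : ℂ)) (((4 * Stmt17aux.z3 : ℝ)) : ℂ) :=
    Complex.ofRealCLM.hasSum Stmt17aux.main_hasSum
  have hC' : HasSum (fun n : ℕ => ((harmonic (n + 1) : ℂ) ^ 2 + H2 (n + 1)) /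
      (((n : ℂ) + 1) * ((n : ℂ) + 2))) (((4 * Stmt17aux.z3 : ℝ)) : ℂ) := by
    refine hC.congr_fun fun n => ?_
    rw [Stmt17aux.term, Stmt17aux.aR, H2_eq]
    have hh : ((Stmt17aux.h (n+1) : ℝ) : ℂ) = (harmonic (n+1) : ℂ) := by
      rw [Stmt17aux.h]
      push_cast
      ring
    push_cast [← hh]
    ring
  rw [hC'.tsum_eq, Stmt17aux.z3_complex]
  push_cast
  ring
end
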